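/- arXiv:2204.07671 — 3 statements merged into one kernel-verified Lean document; each statement's English description precedes it below -/
import Mathlib

section
/- Every theta is an HC-obstruction: every theta is 2-connected, has no Hamiltonian cycle, and every induced subgraph of a theta either equals the whole graph, is not 2-connected, or is Hamiltonian. -/
open SimpleGraph

universe u

variable {V : Type u}

/-- A graph is 2-connected if it has at least three vertices, is connected,
and deleting any single vertex leaves a connected graph. -/
def TwoConnected (G : SimpleGraph V) : Prop :=
  3 ≤ Nat.card V ∧ G.Connected ∧ ∀ v : V, (G.induce ({v}ᶜ : Set V)).Connected

/-- A graph is Hamiltonian if it has a Hamiltonian cycle. -/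
def IsHamiltonianGraph (G : SimpleGraph V) : Prop :=
  ∃ (a : V) (p : G.Walk a a), p.IsCycle ∧ ∀ x : V, x ∈ p.support

/-- An HC-obstruction: 2-connected, non-Hamiltonian, and every proper induced
subgraph is not 2-connected or Hamiltonian. -/
def IsHCObstruction (G : SimpleGraph V) : Prop :=
  TwoConnected G ∧ ¬ IsHamiltonianGraph G ∧
    ∀ X : Set V, X ≠ Set.univ →
      ¬ TwoConnected (G.induce X) ∨ IsHamiltonianGraph (G.induce X)

/-- A theta: the union of three internally vertex-disjoint paths of length at
least two between two distinct vertices `a`, `b`, with no other edges. -/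
def IsTheta (G : SimpleGraph V) : Prop :=
  ∃ (a b : V) (P₁ P₂ P₃ : G.Walk a b),
    a ≠ b ∧
    P₁.IsPath ∧ P₂.IsPath ∧ P₃.IsPath ∧
    2 ≤ P₁.length ∧ 2 ≤ P₂.length ∧ 2 ≤ P₃.length ∧
    (∀ x, x ∈ P₁.support → x ∈ P₂.support → x = a ∨ x = b) ∧
    (∀ x, x ∈ P₁.support → x ∈ P₃.support → x = a ∨ x = b) ∧
    (∀ x, x ∈ P₂.support → x ∈ P₃.support → x = a ∨ x = b) ∧
    (∀ x : V, x ∈ P₁.support ∨ x ∈ P₂.support ∨ x ∈ P₃.support) ∧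
    (∀ e, e ∈ G.edgeSet → e ∈ P₁.edges ∨ e ∈ P₂.edges ∨ e ∈ P₃.edges)

/-- A theta⁺: a theta together with the edge joining its two endpoints. -/
def IsThetaPlus (G : SimpleGraph V) : Prop :=
  ∃ (a b : V) (P₁ P₂ P₃ : G.Walk a b),
    a ≠ b ∧ G.Adj a b ∧
    P₁.IsPath ∧ P₂.IsPath ∧ P₃.IsPath ∧
    2 ≤ P₁.length ∧ 2 ≤ P₂.length ∧ 2 ≤ P₃.length ∧
    (∀ x, x ∈ P₁.support → x ∈ P₂.support → x = a ∨ x = b) ∧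
    (∀ x, x ∈ P₁.support → x ∈ P₃.support → x = a ∨ x = b) ∧
    (∀ x, x ∈ P₂.support → x ∈ P₃.support → x = a ∨ x = b) ∧
    (∀ x : V, x ∈ P₁.support ∨ x ∈ P₂.support ∨ x ∈ P₃.support) ∧
    (∀ e, e ∈ G.edgeSet →
      e = s(a, b) ∨ e ∈ P₁.edges ∨ e ∈ P₂.edges ∨ e ∈ P₃.edges)

/-- A prism: two vertex-disjoint triangles joined by three pairwise
vertex-disjoint paths of length at least two, with no other edges. -/
def IsPrism (G : SimpleGraph V) : Prop :=
  ∃ (k₁ k₂ k₃ l₁ l₂ l₃ : V) (P₁ : G.Walk k₁ l₁) (P₂ : G.Walk k₂ l₂) (P₃ : G.Walk k₃ l₃),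
    G.Adj k₁ k₂ ∧ G.Adj k₂ k₃ ∧ G.Adj k₁ k₃ ∧
    G.Adj l₁ l₂ ∧ G.Adj l₂ l₃ ∧ G.Adj l₁ l₃ ∧
    P₁.IsPath ∧ P₂.IsPath ∧ P₃.IsPath ∧
    2 ≤ P₁.length ∧ 2 ≤ P₂.length ∧ 2 ≤ P₃.length ∧
    (∀ x, x ∈ P₁.support → x ∉ P₂.support) ∧
    (∀ x, x ∈ P₁.support → x ∉ P₃.support) ∧
    (∀ x, x ∈ P₂.support → x ∉ P₃.support) ∧
    (∀ x : V, x ∈ P₁.support ∨ x ∈ P₂.support ∨ x ∈ P₃.support) ∧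
    (∀ e, e ∈ G.edgeSet →
      e = s(k₁, k₂) ∨ e = s(k₂, k₃) ∨ e = s(k₁, k₃) ∨
      e = s(l₁, l₂) ∨ e = s(l₂, l₃) ∨ e = s(l₁, l₃) ∨
      e ∈ P₁.edges ∨ e ∈ P₂.edges ∨ e ∈ P₃.edges)

/-- A prism⁺: a prism together with, for each index in a nonempty subset of
`{1,2,3}`, the edge joining the ends `kᵢ`, `lᵢ` of the corresponding path. -/
def IsPrismPlus (G : SimpleGraph V) : Prop :=
  ∃ (k₁ k₂ k₃ l₁ l₂ l₃ : V) (P₁ : G.Walk k₁ l₁) (P₂ : G.Walk k₂ l₂) (P₃ : G.Walk k₃ l₃)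
    (b₁ b₂ b₃ : Prop),
    (b₁ ∨ b₂ ∨ b₃) ∧
    (b₁ → G.Adj k₁ l₁) ∧ (b₂ → G.Adj k₂ l₂) ∧ (b₃ → G.Adj k₃ l₃) ∧
    G.Adj k₁ k₂ ∧ G.Adj k₂ k₃ ∧ G.Adj k₁ k₃ ∧
    G.Adj l₁ l₂ ∧ G.Adj l₂ l₃ ∧ G.Adj l₁ l₃ ∧
    P₁.IsPath ∧ P₂.IsPath ∧ P₃.IsPath ∧
    2 ≤ P₁.length ∧ 2 ≤ P₂.length ∧ 2 ≤ P₃.length ∧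
    (∀ x, x ∈ P₁.support → x ∉ P₂.support) ∧
    (∀ x, x ∈ P₁.support → x ∉ P₃.support) ∧
    (∀ x, x ∈ P₂.support → x ∉ P₃.support) ∧
    (∀ x : V, x ∈ P₁.support ∨ x ∈ P₂.support ∨ x ∈ P₃.support) ∧
    (∀ e, e ∈ G.edgeSet →
      e = s(k₁, k₂) ∨ e = s(k₂, k₃) ∨ e = s(k₁, k₃) ∨
      e = s(l₁, l₂) ∨ e = s(l₂, l₃) ∨ e = s(l₁, l₃) ∨
      (b₁ ∧ e = s(k₁, l₁)) ∨ (b₂ ∧ e = s(k₂, l₂)) ∨ (b₃ ∧ e = s(k₃, l₃)) ∨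
      e ∈ P₁.edges ∨ e ∈ P₂.edges ∨ e ∈ P₃.edges)

/-- A pyramid: a triangle `{k₁,k₂,k₃}` and an apex `l`, joined by three
internally vertex-disjoint paths of length at least two, with no other edges. -/
def IsPyramid (G : SimpleGraph V) : Prop :=
  ∃ (k₁ k₂ k₃ l : V) (P₁ : G.Walk k₁ l) (P₂ : G.Walk k₂ l) (P₃ : G.Walk k₃ l),
    G.Adj k₁ k₂ ∧ G.Adj k₂ k₃ ∧ G.Adj k₁ k₃ ∧
    P₁.IsPath ∧ P₂.IsPath ∧ P₃.IsPath ∧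
    2 ≤ P₁.length ∧ 2 ≤ P₂.length ∧ 2 ≤ P₃.length ∧
    (∀ x, x ∈ P₁.support → x ∈ P₂.support → x = l) ∧
    (∀ x, x ∈ P₁.support → x ∈ P₃.support → x = l) ∧
    (∀ x, x ∈ P₂.support → x ∈ P₃.support → x = l) ∧
    (∀ x : V, x ∈ P₁.support ∨ x ∈ P₂.support ∨ x ∈ P₃.support) ∧
    (∀ e, e ∈ G.edgeSet →
      e = s(k₁, k₂) ∨ e = s(k₂, k₃) ∨ e = s(k₁, k₃) ∨
      e ∈ P₁.edges ∨ e ∈ P₂.edges ∨ e ∈ P₃.edges)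

/-- A pyramid⁺: a pyramid together with, for each index in a nonempty subset of
`{1,2,3}`, the edge joining the ends `kᵢ`, `l` of the corresponding path. -/
def IsPyramidPlus (G : SimpleGraph V) : Prop :=
  ∃ (k₁ k₂ k₃ l : V) (P₁ : G.Walk k₁ l) (P₂ : G.Walk k₂ l) (P₃ : G.Walk k₃ l)
    (b₁ b₂ b₃ : Prop),
    (b₁ ∨ b₂ ∨ b₃) ∧
    (b₁ → G.Adj k₁ l) ∧ (b₂ → G.Adj k₂ l) ∧ (b₃ → G.Adj k₃ l) ∧
    G.Adj k₁ k₂ ∧ G.Adj k₂ k₃ ∧ G.Adj k₁ k₃ ∧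
    P₁.IsPath ∧ P₂.IsPath ∧ P₃.IsPath ∧
    2 ≤ P₁.length ∧ 2 ≤ P₂.length ∧ 2 ≤ P₃.length ∧
    (∀ x, x ∈ P₁.support → x ∈ P₂.support → x = l) ∧
    (∀ x, x ∈ P₁.support → x ∈ P₃.support → x = l) ∧
    (∀ x, x ∈ P₂.support → x ∈ P₃.support → x = l) ∧
    (∀ x : V, x ∈ P₁.support ∨ x ∈ P₂.support ∨ x ∈ P₃.support) ∧
    (∀ e, e ∈ G.edgeSet →
      e = s(k₁, k₂) ∨ e = s(k₂, k₃) ∨ e = s(k₁, k₃) ∨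
      (b₁ ∧ e = s(k₁, l)) ∨ (b₂ ∧ e = s(k₂, l)) ∨ (b₃ ∧ e = s(k₃, l)) ∨
      e ∈ P₁.edges ∨ e ∈ P₂.edges ∨ e ∈ P₃.edges)

/-- A 3-path-configuration: a prism, a pyramid, a theta, a prism⁺, a
pyramid⁺, or a theta⁺. -/
def IsThreePathConfig (G : SimpleGraph V) : Prop :=
  IsPrism G ∨ IsPyramid G ∨ IsTheta G ∨ IsPrismPlus G ∨ IsPyramidPlus G ∨ IsThetaPlus G

/-- A wheel: a cycle together with one extra vertex having at least three
neighbors on the cycle, and no other edges. -/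
def IsWheel (G : SimpleGraph V) : Prop :=
  ∃ (c u : V) (w : G.Walk u u), w.IsCycle ∧ c ∉ w.support ∧
    (∀ x : V, x = c ∨ x ∈ w.support) ∧
    3 ≤ {x | x ∈ w.support ∧ G.Adj c x}.ncard ∧
    (∀ e, e ∈ G.edgeSet → e ∈ w.edges ∨ ∃ x ∈ w.support, e = s(c, x))

/-- A graph is wheel-free if no induced subgraph is a wheel. -/
def WheelFree (G : SimpleGraph V) : Prop :=
  ∀ X : Set V, ¬ IsWheel (G.induce X)

/-- A set of vertices is a cutset if deleting it leaves a disconnected graph. -/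
def IsCutset (G : SimpleGraph V) (X : Set V) : Prop :=
  ¬ (G.induce (Xᶜ : Set V)).Preconnected

section ThetaAux

open Walk

variable {G : SimpleGraph V}

lemma myGetVert_mem_support {u v : V} (p : G.Walk u v) (i : ℕ) :
    p.getVert i ∈ p.support := by
  rcases le_or_gt i p.length with h | h
  · exact Walk.mem_support_iff_exists_getVert.mpr ⟨i, rfl, h⟩
  · rw [Walk.getVert_of_length_le p h.le]
    exact p.end_mem_support

lemma myGetVert_injOn {u v : V} {p : G.Walk u v} (hp : p.IsPath) :
    ∀ i ≤ p.length, ∀ j ≤ p.length, p.getVert i = p.getVert j → i = j := by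
  induction p with
  | nil => intro i hi j hj _; simp at hi hj; omega
  | cons h q ih =>
    rw [Walk.cons_isPath_iff] at hp
    intro i hi j hj hij
    match i, j with
    | 0, 0 => rfl
    | 0, (j+1) =>
      exfalso
      rw [Walk.getVert_zero, Walk.getVert_cons_succ] at hij
      exact hp.2 (hij ▸ myGetVert_mem_support q j)
    | (i+1), 0 =>
      exfalso
      rw [Walk.getVert_zero, Walk.getVert_cons_succ] at hij
      exact hp.2 (hij ▸ myGetVert_mem_support q i)
    | (i+1), (j+1) =>
      rw [Walk.getVert_cons_succ, Walk.getVert_cons_succ] at hij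
      simp only [Walk.length_cons, Nat.add_le_add_iff_right] at hi hj
      exact congrArg (· + 1) (ih hp.1 i hi j hj hij)

lemma myEdge_getVert_mem {u v : V} (p : G.Walk u v) {i : ℕ} (hi : i < p.length) :
    s(p.getVert i, p.getVert (i+1)) ∈ p.edges := by
  induction p generalizing i with
  | nil => simp at hi
  | cons h q ih =>
    match i with
    | 0 =>
      rw [Walk.getVert_zero, Walk.getVert_cons_succ, Walk.getVert_zero, Walk.edges_cons]
      exact List.mem_cons_self
    | (i+1) =>
      rw [Walk.getVert_cons_succ, Walk.getVert_cons_succ, Walk.edges_cons]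
      exact List.mem_cons_of_mem _ (ih (by simpa using hi))

/-- In a path, any edge at the start vertex goes to `getVert 1`. -/
lemma myPathStart {u v y : V} {p : G.Walk u v} (hp : p.IsPath)
    (he : s(u, y) ∈ p.edges) : y = p.getVert 1 := by
  cases p with
  | nil => simp at he
  | cons h q =>
    rw [Walk.cons_isPath_iff] at hp
    rw [Walk.edges_cons, List.mem_cons] at he
    rcases he with he | he
    · rw [Sym2.eq_iff] at he
      rcases he with ⟨-, h2⟩ | ⟨h1, -⟩
      · rw [Walk.getVert_cons_succ, Walk.getVert_zero]; exact h2
      · exact absurd (h1 ▸ q.start_mem_support) hp.2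
    · exact absurd (Walk.fst_mem_support_of_mem_edges q he) hp.2

/-- A vertex has at most two neighbors along a path. -/
lemma myPathNbrUB {u v x : V} {p : G.Walk u v} (hp : p.IsPath) :
    ∃ y z, ∀ w, s(x, w) ∈ p.edges → w = y ∨ w = z := by
  induction p with
  | nil => exact ⟨x, x, by simp⟩
  | cons h q ih =>
    rename_i a c d
    rw [Walk.cons_isPath_iff] at hp
    by_cases hxa : x = a
    · subst hxa
      refine ⟨c, c, fun w hw => ?_⟩
      rw [Walk.edges_cons, List.mem_cons] at hw
      rcases hw with hw | hw
      · rw [Sym2.eq_iff] at hw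
        rcases hw with ⟨-, h2⟩ | ⟨h1, -⟩
        · exact Or.inl h2
        · exact absurd (h1 ▸ q.start_mem_support) hp.2
      · exact absurd (Walk.fst_mem_support_of_mem_edges q hw) hp.2
    · by_cases hxc : x = c
      · subst hxc
        refine ⟨a, q.getVert 1, fun w hw => ?_⟩
        rw [Walk.edges_cons, List.mem_cons] at hw
        rcases hw with hw | hw
        · rw [Sym2.eq_iff] at hw
          rcases hw with ⟨h1, -⟩ | ⟨-, h2⟩
          · exact absurd h1 hxa
          · exact Or.inl h2
        · exact Or.inr (myPathStart hp.1 hw)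
      · obtain ⟨y, z, hyz⟩ := ih hp.1
        refine ⟨y, z, fun w hw => ?_⟩
        rw [Walk.edges_cons, List.mem_cons] at hw
        rcases hw with hw | hw
        · rw [Sym2.eq_iff] at hw
          rcases hw with ⟨h1, -⟩ | ⟨h1, -⟩
          · exact absurd h1 hxa
          · exact absurd h1 hxc
        · exact hyz w hw

/-- In a cycle, the start vertex has exactly two neighbors along the cycle. -/
lemma myCycleStart [DecidableEq V] {u : V} {w : G.Walk u u} (hw : w.IsCycle) :
    ∃ y z, y ≠ z ∧ s(u, y) ∈ w.edges ∧ s(u, z) ∈ w.edges ∧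
      ∀ t, s(u, t) ∈ w.edges → t = y ∨ t = z := by
  cases w with
  | nil => exact absurd rfl hw.ne_nil
  | cons h q =>
    rename_i c
    rw [Walk.cons_isCycle_iff] at hw
    obtain ⟨hq, he⟩ := hw
    have hqnil : ¬ q.Nil := Walk.not_nil_of_ne (fun hcu => G.irrefl (hcu ▸ h))
    have hqrnil : ¬ q.reverse.Nil := by
      rw [Walk.nil_iff_length_eq] at hqnil ⊢
      rwa [Walk.length_reverse]
    have hzq : s(u, q.reverse.getVert 1) ∈ q.edges := by
      have := myEdge_getVert_mem q.reverse (i := 0)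
        (by rw [Walk.length_reverse]; rw [Walk.nil_iff_length_eq] at hqnil; omega)
      rw [Walk.getVert_zero, Walk.edges_reverse, List.mem_reverse] at this
      exact this
    refine ⟨c, q.reverse.getVert 1, ?_, by simp, by rw [Walk.edges_cons]; exact List.mem_cons_of_mem _ hzq, ?_⟩
    · intro hcz
      apply he
      have h2 := hzq
      rw [← hcz] at h2
      exact h2
    · intro t ht
      rw [Walk.edges_cons, List.mem_cons] at ht
      rcases ht with ht | ht
      · rw [Sym2.eq_iff] at ht
        rcases ht with ⟨-, h2⟩ | ⟨h1, h2⟩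
        · exact Or.inl h2
        · exact (G.irrefl (h1 ▸ h)).elim
      · right
        have : s(u, t) ∈ q.reverse.edges := by rwa [Walk.edges_reverse, List.mem_reverse]
        exact myPathStart hq.reverse this

/-- In a cycle, every support vertex has exactly two neighbors along the cycle. -/
lemma myCycleNbrs [DecidableEq V] {u x : V} {w : G.Walk u u} (hw : w.IsCycle) (hx : x ∈ w.support) :
    ∃ y z, y ≠ z ∧ s(x, y) ∈ w.edges ∧ s(x, z) ∈ w.edges ∧
      ∀ t, s(x, t) ∈ w.edges → t = y ∨ t = z := by
  have hrot := hw.rotate hx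
  have hperm := (w.rotate_edges x hx).perm
  obtain ⟨y, z, hyz, hy, hz, hcomp⟩ := myCycleStart hrot
  exact ⟨y, z, hyz, hperm.mem_iff.mp hy, hperm.mem_iff.mp hz,
    fun t ht => hcomp t (hperm.mem_iff.mpr ht)⟩

/-- supports of takeUntil and dropUntil of a path intersect only at the split point. -/
lemma myTakeDropDisj [DecidableEq V] {u v x y : V} {p : G.Walk u v} (hp : p.IsPath) (hx : x ∈ p.support)
    (hyd : y ∈ (p.dropUntil x hx).support) (hyx : y ≠ x) :
    y ∉ (p.takeUntil x hx).support := by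
  intro hyt
  have hnd := hp.support_nodup
  rw [← Walk.take_spec p hx, Walk.support_append] at hnd
  have hyd' : y ∈ (p.dropUntil x hx).support.tail := by
    have := Walk.support_eq_cons (p.dropUntil x hx)
    rw [this, List.mem_cons] at hyd
    rcases hyd with h | h
    · exact absurd h hyx
    · exact h
  exact (List.disjoint_of_nodup_append hnd) hyt hyd'

/-- Transfer a walk into an induced subgraph containing its support. -/
def induceWalk {X : Set V} : ∀ {u v : V} (p : G.Walk u v) (_ : ∀ x ∈ p.support, x ∈ X),
    (G.induce X).Walk ⟨u, by simp_all⟩ ⟨v, by simp_all [Walk.end_mem_support]⟩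
  | _, _, Walk.nil, _ => Walk.nil
  | _, _, Walk.cons ha q, h =>
      Walk.cons (by exact ha) (induceWalk q (fun x hx => h x (by simp [hx])))

lemma induceWalk_support {X : Set V} {u v : V} (p : G.Walk u v) (h : ∀ x ∈ p.support, x ∈ X) :
    (induceWalk p h).support.map Subtype.val = p.support := by
  induction p with
  | nil => simp [induceWalk]
  | cons ha q ih => exact congrArg₂ List.cons rfl (ih _)

lemma induceWalk_edges {X : Set V} {u v : V} (p : G.Walk u v) (h : ∀ x ∈ p.support, x ∈ X) :
    (induceWalk p h).edges.map (Sym2.map Subtype.val) = p.edges := by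
  induction p with
  | nil => simp [induceWalk]
  | cons ha q ih => exact congrArg₂ List.cons rfl (ih _)

lemma induceWalk_reachable {X : Set V} {u v : V} (p : G.Walk u v)
    (h : ∀ x ∈ p.support, x ∈ X) (hu : u ∈ X) (hv : v ∈ X) :
    (G.induce X).Reachable ⟨u, hu⟩ ⟨v, hv⟩ :=
  ⟨(induceWalk p h).copy (Subtype.ext rfl) (Subtype.ext rfl)⟩

lemma induceWalk_isCycle {X : Set V} {u : V} (p : G.Walk u u) (h : ∀ x ∈ p.support, x ∈ X)
    (hp : p.IsCycle) : (induceWalk p h).IsCycle := by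
  rw [Walk.isCycle_def]
  refine ⟨?_, ?_, ?_⟩
  · rw [Walk.isTrail_def]
    have := hp.isTrail.edges_nodup
    rw [← induceWalk_edges p h] at this
    exact this.of_map _
  · intro hnil
    have h1 : (induceWalk p h).edges.length = p.edges.length := by
      rw [← induceWalk_edges p h, List.length_map]
    rw [hnil] at h1
    simp only [Walk.edges_nil, List.length_nil, Walk.length_edges] at h1
    have := hp.three_le_length
    omega
  · have := hp.support_nodup  -- support.tail.Nodup
    have h2 : (induceWalk p h).support.tail.map Subtype.val = p.support.tail := by
      have h3 := congrArg List.tail (induceWalk_support p h)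
      rwa [show ∀ (l : List X) (f : X → V), (l.map f).tail = l.tail.map f from
        fun l f => by cases l <;> simp] at h3
    rw [← h2] at this
    exact this.of_map _

/-- If a type has at least 3 elements, there is an element distinct from two given. -/
lemma exists_third {W : Type*} [Finite W] (hW : 3 ≤ Nat.card W) (x y : W) :
    ∃ z, z ≠ x ∧ z ≠ y := by
  by_contra hc
  push_neg at hc
  classical
  have hinj : Function.Injective (fun z : W => (decide (z = x) : Bool)) := by
    intro z z' hzz'
    simp only [decide_eq_decide] at hzz'
    by_cases hz : z = x
    · exact hz.trans (hzz'.mp hz).symm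
    · have hz' : ¬ z' = x := fun hh => hz (hzz'.mpr hh)
      rw [hc z hz, hc z' hz']
  have := Nat.card_le_card_of_injective _ hinj
  simp [Nat.card_eq_fintype_card] at this
  omega

/-- In a 2-connected graph every vertex has two distinct neighbors. -/
lemma twoConnected_min_degree {W : Type*} [Finite W] {H : SimpleGraph W}
    (h3 : 3 ≤ Nat.card W) (hconn : H.Connected)
    (hdel : ∀ v : W, (H.induce ({v}ᶜ : Set W)).Connected) (x : W) :
    ∃ y z, y ≠ z ∧ H.Adj x y ∧ H.Adj x z := by
  -- first neighbor
  obtain ⟨w, hw, -⟩ := exists_third h3 x x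
  obtain ⟨p⟩ := hconn.preconnected x w
  have hpnil : ¬ p.Nil := Walk.not_nil_of_ne (Ne.symm hw)
  have hy : H.Adj x (p.getVert 1) := Walk.adj_snd hpnil
  set y := p.getVert 1
  by_contra hc
  push_neg at hc
  have huniq : ∀ z, H.Adj x z → z = y := by
    intro z hz
    by_contra hzy
    by_cases hyz : y = z
    · exact hzy hyz.symm
    · exact (hc y z (fun hyz' => hyz hyz') hy hz).elim
  -- delete y
  have hconn' := hdel y
  have hxy : x ≠ y := hy.ne
  obtain ⟨t, htx, hty⟩ := exists_third h3 x y
  have hreach := hconn'.preconnected ⟨x, hxy⟩ ⟨t, hty⟩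
  obtain ⟨q⟩ := hreach
  have hqnil : ¬ q.Nil := Walk.not_nil_of_ne (by simpa [Subtype.ext_iff] using Ne.symm htx)
  have hadj := Walk.adj_snd hqnil
  have : H.Adj x (q.getVert 1).val := hadj
  have := huniq _ this
  exact (q.getVert 1).prop this

lemma myNotEdgeEnds {a b : V} {P : G.Walk a b} (hP : P.IsPath) (hl : 2 ≤ P.length) :
    s(a, b) ∉ P.edges := by
  intro h
  have hb := myPathStart hP h
  have : P.getVert P.length = P.getVert 1 := by rw [P.getVert_length]; exact hb
  have := myGetVert_injOn hP P.length le_rfl 1 (by omega) this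
  omega

/-- Bundled theta data. -/
structure TD (G : SimpleGraph V) where
  a : V
  b : V
  P1 : G.Walk a b
  P2 : G.Walk a b
  P3 : G.Walk a b
  hab : a ≠ b
  h1 : P1.IsPath
  h2 : P2.IsPath
  h3 : P3.IsPath
  l1 : 2 ≤ P1.length
  l2 : 2 ≤ P2.length
  l3 : 2 ≤ P3.length
  d12 : ∀ x, x ∈ P1.support → x ∈ P2.support → x = a ∨ x = b
  d13 : ∀ x, x ∈ P1.support → x ∈ P3.support → x = a ∨ x = b
  d23 : ∀ x, x ∈ P2.support → x ∈ P3.support → x = a ∨ x = b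
  cover : ∀ x : V, x ∈ P1.support ∨ x ∈ P2.support ∨ x ∈ P3.support
  edge : ∀ e, e ∈ G.edgeSet → e ∈ P1.edges ∨ e ∈ P2.edges ∨ e ∈ P3.edges

namespace TD

def swap12 (D : TD G) : TD G where
  a := D.a; b := D.b; P1 := D.P2; P2 := D.P1; P3 := D.P3
  hab := D.hab; h1 := D.h2; h2 := D.h1; h3 := D.h3
  l1 := D.l2; l2 := D.l1; l3 := D.l3
  d12 := fun x h h' => D.d12 x h' h
  d13 := D.d23
  d23 := D.d13
  cover := fun x => by have := D.cover x; tauto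
  edge := fun e he => by have := D.edge e he; tauto

def swap23 (D : TD G) : TD G where
  a := D.a; b := D.b; P1 := D.P1; P2 := D.P3; P3 := D.P2
  hab := D.hab; h1 := D.h1; h2 := D.h3; h3 := D.h2
  l1 := D.l1; l2 := D.l3; l3 := D.l2
  d12 := D.d13
  d13 := D.d12
  d23 := fun x h h' => D.d23 x h' h
  cover := fun x => by have := D.cover x; tauto
  edge := fun e he => by have := D.edge e he; tauto

def rev (D : TD G) : TD G where
  a := D.b; b := D.a; P1 := D.P1.reverse; P2 := D.P2.reverse; P3 := D.P3.reverse
  hab := D.hab.symm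
  h1 := D.h1.reverse; h2 := D.h2.reverse; h3 := D.h3.reverse
  l1 := by rw [Walk.length_reverse]; exact D.l1
  l2 := by rw [Walk.length_reverse]; exact D.l2
  l3 := by rw [Walk.length_reverse]; exact D.l3
  d12 := fun x h h' => (D.d12 x (by simpa [Walk.support_reverse] using h)
    (by simpa [Walk.support_reverse] using h')).symm
  d13 := fun x h h' => (D.d13 x (by simpa [Walk.support_reverse] using h)
    (by simpa [Walk.support_reverse] using h')).symm
  d23 := fun x h h' => (D.d23 x (by simpa [Walk.support_reverse] using h)
    (by simpa [Walk.support_reverse] using h')).symm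
  cover := fun x => by
    have := D.cover x; simp only [Walk.support_reverse, List.mem_reverse]; tauto
  edge := fun e he => by
    have := D.edge e he; simp only [Walk.edges_reverse, List.mem_reverse]; tauto

variable (D : TD G)

/-- Every edge at an internal vertex of `P1` is an edge of `P1`. -/
lemma interior1_edge {x y : V} (hx : x ∈ D.P1.support) (hxa : x ≠ D.a) (hxb : x ≠ D.b)
    (hadj : G.Adj x y) : s(x, y) ∈ D.P1.edges := by
  rcases D.edge _ (G.mem_edgeSet.mpr hadj) with h | h | h
  · exact h
  · exact absurd (D.d12 x hx (Walk.fst_mem_support_of_mem_edges _ h)) (by tauto)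
  · exact absurd (D.d13 x hx (Walk.fst_mem_support_of_mem_edges _ h)) (by tauto)

lemma getVert1_ne_a : D.P1.getVert 1 ≠ D.a := by
  intro h
  have : D.P1.getVert 1 = D.P1.getVert 0 := by rw [h, Walk.getVert_zero]
  have := myGetVert_injOn D.h1 1 (by have := D.l1; omega) 0 (by omega) this
  omega

lemma getVert1_ne_b : D.P1.getVert 1 ≠ D.b := by
  intro h
  have : D.P1.getVert 1 = D.P1.getVert D.P1.length := by rw [h, Walk.getVert_length]
  have := myGetVert_injOn D.h1 1 (by have := D.l1; omega) D.P1.length le_rfl this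
  have := D.l1
  omega

lemma getVert_interior_ne_a {t : ℕ} (ht0 : 0 < t) (htL : t ≤ D.P1.length) :
    D.P1.getVert t ≠ D.a := by
  intro h
  have : D.P1.getVert t = D.P1.getVert 0 := by rw [h, Walk.getVert_zero]
  have := myGetVert_injOn D.h1 t htL 0 (by omega) this
  omega

lemma getVert_interior_ne_b {t : ℕ} (htL : t < D.P1.length) :
    D.P1.getVert t ≠ D.b := by
  intro h
  have : D.P1.getVert t = D.P1.getVert D.P1.length := by rw [h, Walk.getVert_length]
  have := myGetVert_injOn D.h1 t htL.le D.P1.length le_rfl this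
  omega

/-- The neighbors of an internal vertex of `P1` are its neighbors along `P1`. -/
lemma interior1_nbrs {t : ℕ} {y : V} (ht0 : 0 < t) (htL : t < D.P1.length)
    (hadj : G.Adj (D.P1.getVert t) y) :
    y = D.P1.getVert (t-1) ∨ y = D.P1.getVert (t+1) := by
  obtain ⟨Y, Z, hYZ⟩ := myPathNbrUB (x := D.P1.getVert t) D.h1
  have he1 : s(D.P1.getVert t, D.P1.getVert (t-1)) ∈ D.P1.edges := by
    rw [Sym2.eq_swap]
    have := myEdge_getVert_mem D.P1 (i := t-1) (by omega)
    rwa [show t - 1 + 1 = t by omega] at this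
  have he2 : s(D.P1.getVert t, D.P1.getVert (t+1)) ∈ D.P1.edges := myEdge_getVert_mem D.P1 htL
  have hey : s(D.P1.getVert t, y) ∈ D.P1.edges :=
    D.interior1_edge (myGetVert_mem_support _ _)
      (D.getVert_interior_ne_a ht0 htL.le) (D.getVert_interior_ne_b htL) hadj
  have hne : D.P1.getVert (t-1) ≠ D.P1.getVert (t+1) := by
    intro h
    have := myGetVert_injOn D.h1 (t-1) (by omega) (t+1) (by omega) h
    omega
  have h1 := hYZ _ he1
  have h2 := hYZ _ he2
  have h3 := hYZ _ hey
  rcases h1 with h1 | h1 <;> rcases h2 with h2 | h2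
  · exact absurd (h1.trans h2.symm) hne
  · rcases h3 with h3 | h3
    · exact Or.inl (h3.trans h1.symm)
    · exact Or.inr (h3.trans h2.symm)
  · rcases h3 with h3 | h3
    · exact Or.inr (h3.trans h2.symm)
    · exact Or.inl (h3.trans h1.symm)
  · exact absurd (h1.trans h2.symm) hne

/-- The neighbors of `a` are the second vertices of the three paths. -/
lemma a_nbrs {y : V} (hadj : G.Adj D.a y) :
    y = D.P1.getVert 1 ∨ y = D.P2.getVert 1 ∨ y = D.P3.getVert 1 := by
  rcases D.edge _ (G.mem_edgeSet.mpr hadj) with h | h | h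
  · exact Or.inl (myPathStart D.h1 h)
  · exact Or.inr (Or.inl (myPathStart D.h2 h))
  · exact Or.inr (Or.inr (myPathStart D.h3 h))

lemma getVert1_ne_getVert1 : D.P1.getVert 1 ≠ D.P2.getVert 1 := by
  intro h
  have h1 : D.P1.getVert 1 ∈ D.P1.support := myGetVert_mem_support _ _
  have h2 : D.P1.getVert 1 ∈ D.P2.support := h ▸ myGetVert_mem_support _ _
  rcases D.d12 _ h1 h2 with hh | hh
  · exact D.getVert1_ne_a hh
  · exact D.getVert1_ne_b hh

/-- Propagation along `P1` for vertex sets in which every vertex has two distinct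
neighbors. -/
lemma propagate {X : Set V}
    (CP : ∀ x ∈ X, ∃ y z, y ≠ z ∧ y ∈ X ∧ z ∈ X ∧ G.Adj x y ∧ G.Adj x z)
    {t : ℕ} (ht0 : 0 < t) (htL : t < D.P1.length) (htX : D.P1.getVert t ∈ X) :
    ∀ s ≤ D.P1.length, D.P1.getVert s ∈ X := by
  have step : ∀ r, 0 < r → r < D.P1.length → D.P1.getVert r ∈ X →
      D.P1.getVert (r-1) ∈ X ∧ D.P1.getVert (r+1) ∈ X := by
    intro r hr0 hrL hrX
    obtain ⟨y, z, hyz, hyX, hzX, hy, hz⟩ := CP _ hrX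
    have hy' := D.interior1_nbrs hr0 hrL hy
    have hz' := D.interior1_nbrs hr0 hrL hz
    rcases hy' with hy' | hy' <;> rcases hz' with hz' | hz'
    · exact absurd (hy'.trans hz'.symm) hyz
    · exact ⟨hy' ▸ hyX, hz' ▸ hzX⟩
    · exact ⟨hz' ▸ hzX, hy' ▸ hyX⟩
    · exact absurd (hy'.trans hz'.symm) hyz
  have up : ∀ d, t + d ≤ D.P1.length → D.P1.getVert (t + d) ∈ X := by
    intro d
    induction d with
    | zero => intro _; exact htX
    | succ d ih =>
      intro hd
      have h1 := ih (by omega)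
      have h2 := (step (t + d) (by omega) (by omega) h1).2
      rwa [show t + d + 1 = t + (d+1) by omega] at h2
  have down : ∀ d, d ≤ t → D.P1.getVert (t - d) ∈ X := by
    intro d
    induction d with
    | zero => intro _; exact htX
    | succ d ih =>
      intro hd
      have h1 := ih (by omega)
      have h2 := (step (t - d) (by omega) (by omega) h1).1
      rwa [show t - d - 1 = t - (d+1) by omega] at h2
  intro s hs
  rcases le_or_gt t s with h | h
  · have := up (s - t) (by omega)
    rwa [show t + (s - t) = s by omega] at this
  · have := down (t - s) (by omega)
    rwa [show t - (t - s) = s by omega] at this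

/-- Propagation from a support vertex: the whole of `P1` lies in `X`. -/
lemma propagate_mem {X : Set V}
    (CP : ∀ x ∈ X, ∃ y z, y ≠ z ∧ y ∈ X ∧ z ∈ X ∧ G.Adj x y ∧ G.Adj x z)
    {x : V} (hx : x ∈ D.P1.support) (hxa : x ≠ D.a) (hxb : x ≠ D.b) (hxX : x ∈ X) :
    ∀ y ∈ D.P1.support, y ∈ X := by
  obtain ⟨t, hts, htl⟩ := Walk.mem_support_iff_exists_getVert.mp hx
  have ht0 : 0 < t := by
    rcases Nat.eq_zero_or_pos t with h | h
    · exact absurd (by rw [← hts, h, Walk.getVert_zero]) hxa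
    · exact h
  have htL : t < D.P1.length := by
    rcases eq_or_lt_of_le htl with h | h
    · exact absurd (by rw [← hts, h, Walk.getVert_length]) hxb
    · exact h
  intro y hy
  obtain ⟨s, hss, hsl⟩ := Walk.mem_support_iff_exists_getVert.mp hy
  rw [← hss]
  exact D.propagate CP ht0 htL (hts ▸ hxX) s hsl

/-- `P1` followed by the reverse of `P2` is a cycle. -/
lemma cycle12 : (D.P1.append D.P2.reverse).IsCycle := by
  rw [Walk.isCycle_def]
  refine ⟨?_, ?_, ?_⟩
  · rw [Walk.isTrail_def, Walk.edges_append]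
    refine List.Nodup.append D.h1.isTrail.edges_nodup ?_ ?_
    · rw [Walk.edges_reverse]
      exact List.nodup_reverse.mpr D.h2.isTrail.edges_nodup
    · intro e he1 he2
      rw [Walk.edges_reverse, List.mem_reverse] at he2
      have heS : e ∈ G.edgeSet := D.P1.edges_subset_edgeSet he1
      induction e with
      | h x y =>
        have hx1 := Walk.fst_mem_support_of_mem_edges _ he1
        have hy1 := Walk.snd_mem_support_of_mem_edges _ he1
        have hx2 := Walk.fst_mem_support_of_mem_edges _ he2
        have hy2 := Walk.snd_mem_support_of_mem_edges _ he2
        have hxy : x ≠ y := G.ne_of_adj (G.mem_edgeSet.mp heS)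
        rcases D.d12 x hx1 hx2 with hx | hx <;> rcases D.d12 y hy1 hy2 with hy | hy
        · exact hxy (hx.trans hy.symm)
        · subst hx; subst hy
          exact myNotEdgeEnds D.h1 D.l1 he1
        · subst hx; subst hy
          have he1' := he1
          rw [show s(D.b, D.a) = s(D.a, D.b) from Sym2.eq_swap] at he1'
          exact myNotEdgeEnds D.h1 D.l1 he1'
        · exact hxy (hx.trans hy.symm)
  · intro hnil
    have := congrArg Walk.length hnil
    rw [Walk.length_append, Walk.length_reverse] at this
    simp only [Walk.length_nil] at this
    have := D.l1
    omega
  · have hdecomp : (D.P1.append D.P2.reverse).support.tail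
        = D.P1.support.tail ++ D.P2.reverse.support.tail := by
      rw [Walk.support_append]
      conv_lhs => rw [Walk.support_eq_cons D.P1]
      rw [List.cons_append, List.tail_cons]
    rw [hdecomp]
    refine List.Nodup.append (D.h1.support_nodup.sublist (List.tail_sublist _))
      (D.h2.reverse.support_nodup.sublist (List.tail_sublist _)) ?_
    intro x hx1 hx2
    have hx1' : x ∈ D.P1.support := List.mem_of_mem_tail hx1
    have hx2' : x ∈ D.P2.support := by
      have := List.mem_of_mem_tail hx2
      rwa [Walk.support_reverse, List.mem_reverse] at this
    rcases D.d12 x hx1' hx2' with h | h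
    · subst h
      have := D.h1.support_nodup
      rw [Walk.support_eq_cons D.P1] at this
      exact (List.nodup_cons.mp this).1 hx1
    · subst h
      have := D.h2.reverse.support_nodup
      rw [Walk.support_eq_cons D.P2.reverse] at this
      exact (List.nodup_cons.mp this).1 hx2

end TD

namespace TD
variable (D : TD G)
include D

lemma card3 [Finite V] : 3 ≤ Nat.card V := by
  have h3 : ({D.a, D.b, D.P1.getVert 1} : Set V).ncard = 3 :=
    Set.ncard_eq_three.mpr ⟨D.a, D.b, D.P1.getVert 1, D.hab,
      Ne.symm D.getVert1_ne_a, Ne.symm D.getVert1_ne_b, rfl⟩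
  have hle := Set.ncard_le_ncard (Set.subset_univ {D.a, D.b, D.P1.getVert 1})
    (Set.finite_univ (α := V))
  rw [Set.ncard_univ, h3] at hle
  exact hle

lemma reach_a [DecidableEq V] (x : V) : G.Reachable D.a x := by
  rcases D.cover x with h | h | h
  · exact ⟨D.P1.takeUntil x h⟩
  · exact ⟨D.P2.takeUntil x h⟩
  · exact ⟨D.P3.takeUntil x h⟩

lemma conn [DecidableEq V] : G.Connected := by
  classical
  rw [connected_iff]
  exact ⟨fun x y => (D.reach_a x).symm.trans (D.reach_a y), ⟨D.a⟩⟩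

lemma del_a [DecidableEq V] : (G.induce ({D.a}ᶜ : Set V)).Connected := by
  classical
  have hbmem : D.b ∈ ({D.a}ᶜ : Set V) := by simp [D.hab.symm]
  have key : ∀ (P : G.Walk D.a D.b), P.IsPath → ∀ x : V, ∀ (hxa : x ≠ D.a), ∀ hx : x ∈ P.support,
      (G.induce ({D.a}ᶜ : Set V)).Reachable ⟨x, by simp [hxa]⟩ ⟨D.b, hbmem⟩ := by
    intro P hP x hxa hx
    have hsup : ∀ z ∈ (P.dropUntil x hx).support, z ∈ ({D.a}ᶜ : Set V) := by
      intro z hz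
      simp only [Set.mem_compl_iff, Set.mem_singleton_iff]
      intro hza
      subst hza
      exact myTakeDropDisj hP hx hz (Ne.symm hxa) (P.takeUntil x hx).start_mem_support
    exact induceWalk_reachable (P.dropUntil x hx) hsup (by simp [hxa]) hbmem
  rw [connected_iff]
  refine ⟨fun x y => ?_, ⟨⟨D.b, hbmem⟩⟩⟩
  have hx : x.val ≠ D.a := x.prop
  have hy : y.val ≠ D.a := y.prop
  have rx : (G.induce ({D.a}ᶜ : Set V)).Reachable x ⟨D.b, hbmem⟩ := by
    rcases D.cover x.val with h | h | h
    · exact key D.P1 D.h1 x.val hx h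
    · exact key D.P2 D.h2 x.val hx h
    · exact key D.P3 D.h3 x.val hx h
  have ry : (G.induce ({D.a}ᶜ : Set V)).Reachable y ⟨D.b, hbmem⟩ := by
    rcases D.cover y.val with h | h | h
    · exact key D.P1 D.h1 y.val hy h
    · exact key D.P2 D.h2 y.val hy h
    · exact key D.P3 D.h3 y.val hy h
  exact rx.trans ry.symm

lemma del_interior [DecidableEq V] (v : V) (hv1 : v ∈ D.P1.support) (hva : v ≠ D.a) (hvb : v ≠ D.b) :
    (G.induce ({v}ᶜ : Set V)).Connected := by
  classical
  have hv2 : v ∉ D.P2.support := fun h => by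
    rcases D.d12 v hv1 h with h' | h' <;> [exact hva h'; exact hvb h']
  have hv3 : v ∉ D.P3.support := fun h => by
    rcases D.d13 v hv1 h with h' | h' <;> [exact hva h'; exact hvb h']
  have hamem : D.a ∈ ({v}ᶜ : Set V) := by simp [Ne.symm hva]
  have hbmem : D.b ∈ ({v}ᶜ : Set V) := by simp [Ne.symm hvb]
  -- a reaches b via P2
  have hab : (G.induce ({v}ᶜ : Set V)).Reachable ⟨D.a, hamem⟩ ⟨D.b, hbmem⟩ := by
    refine induceWalk_reachable D.P2 (fun z hz => ?_) hamem hbmem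
    simp only [Set.mem_compl_iff, Set.mem_singleton_iff]
    intro hzv; subst hzv; exact hv2 hz
  -- walks within P2/P3 to a
  have key2 : ∀ (P : G.Walk D.a D.b), v ∉ P.support → ∀ x ∈ P.support, ∀ hxv : x ≠ v,
      (G.induce ({v}ᶜ : Set V)).Reachable ⟨x, by simp [hxv]⟩ ⟨D.a, hamem⟩ := by
    intro P hvP x hx hxv
    refine (induceWalk_reachable (P.takeUntil x hx) (fun z hz => ?_) hamem (by simp [hxv])).symm
    simp only [Set.mem_compl_iff, Set.mem_singleton_iff]
    intro hzv; subst hzv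
    exact hvP (Walk.support_takeUntil_subset P hx hz)
  rw [connected_iff]
  refine ⟨?_, ⟨⟨D.a, hamem⟩⟩⟩
  have main : ∀ x : ({v}ᶜ : Set V), (G.induce ({v}ᶜ : Set V)).Reachable x ⟨D.a, hamem⟩ := by
    intro x
    have hxv : x.val ≠ v := x.prop
    rcases D.cover x.val with h | h | h
    · -- on P1 : go to a or to b
      by_cases hvt : v ∈ (D.P1.takeUntil x.val h).support
      · have hvd : v ∉ (D.P1.dropUntil x.val h).support :=
          fun hvd => myTakeDropDisj D.h1 h hvd (Ne.symm hxv) hvt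
        have rb : (G.induce ({v}ᶜ : Set V)).Reachable ⟨x.val, by simp [hxv]⟩ ⟨D.b, hbmem⟩ := by
          refine induceWalk_reachable (D.P1.dropUntil x.val h) (fun z hz => ?_) (by simp [hxv]) hbmem
          simp only [Set.mem_compl_iff, Set.mem_singleton_iff]
          intro hzv; subst hzv; exact hvd hz
        exact rb.trans hab.symm
      · refine (induceWalk_reachable (D.P1.takeUntil x.val h) (fun z hz => ?_) hamem
          (by simp [hxv])).symm
        simp only [Set.mem_compl_iff, Set.mem_singleton_iff]
        intro hzv; subst hzv; exact hvt hz
    · exact key2 D.P2 hv2 x.val h hxv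
    · exact key2 D.P3 hv3 x.val h hxv
  exact fun x y => (main x).trans (main y).symm

/-- The second vertex of `P1` is joined to `a` in every spanning cycle. -/
lemma cycle_edge_a [DecidableEq V] {u : V} {w : G.Walk u u} (hcyc : w.IsCycle)
    (hx : D.P1.getVert 1 ∈ w.support) : s(D.a, D.P1.getVert 1) ∈ w.edges := by
  obtain ⟨y, z, hyz, hy, hz, -⟩ := myCycleNbrs hcyc hx
  have hy' := D.interior1_nbrs (t := 1) one_pos (by have := D.l1; omega)
    (G.mem_edgeSet.mp (w.edges_subset_edgeSet hy))
  have hz' := D.interior1_nbrs (t := 1) one_pos (by have := D.l1; omega)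
    (G.mem_edgeSet.mp (w.edges_subset_edgeSet hz))
  simp only [Nat.sub_self, Walk.getVert_zero] at hy' hz'
  rcases hy' with hy' | hy'
  · subst hy'; rwa [Sym2.eq_swap] at hy
  · rcases hz' with hz' | hz'
    · subst hz'; rwa [Sym2.eq_swap] at hz
    · exact absurd (hy'.trans hz'.symm) hyz

lemma not_ham : ¬ IsHamiltonianGraph G := by
  classical
  rintro ⟨u, w, hcyc, hall⟩
  have he1 := D.cycle_edge_a hcyc (hall _)
  have he2 := D.swap12.cycle_edge_a hcyc (hall _)
  have he3 := (D.swap23.swap12).cycle_edge_a hcyc (hall _)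
  obtain ⟨Y, Z, hYZ, -, -, hcomp⟩ := myCycleNbrs hcyc (hall D.a)
  have h1 := hcomp _ he1
  have h2 := hcomp _ he2
  have h3 := hcomp _ he3
  have hc12 : D.P1.getVert 1 ≠ D.P2.getVert 1 := D.getVert1_ne_getVert1
  have hc13 : D.P1.getVert 1 ≠ D.P3.getVert 1 := D.swap23.getVert1_ne_getVert1
  have hc23 : D.P2.getVert 1 ≠ D.P3.getVert 1 := (D.swap12.swap23).getVert1_ne_getVert1
  rcases h1 with h1 | h1 <;> rcases h2 with h2 | h2 <;> rcases h3 with h3 | h3 <;>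
    first
      | exact hc12 (h1.trans h2.symm)
      | exact hc13 (h1.trans h3.symm)
      | exact hc23 (h2.trans h3.symm)

end TD

namespace TD
variable (D : TD G)
include D

/-- If `a ∉ X` and every vertex of `X` has two distinct neighbors in `X`,
then `X ⊆ {b}`. -/
lemma no_a {X : Set V}
    (CP : ∀ x ∈ X, ∃ y z, y ≠ z ∧ y ∈ X ∧ z ∈ X ∧ G.Adj x y ∧ G.Adj x z)
    (hva : D.a ∉ X) : ∀ x ∈ X, x = D.b := by
  intro x hx
  by_contra hxb
  have hxa : x ≠ D.a := fun h => hva (h ▸ hx)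
  have haX : D.a ∈ X := by
    rcases D.cover x with h | h | h
    · exact D.propagate_mem CP h hxa hxb hx _ D.P1.start_mem_support
    · exact D.swap12.propagate_mem CP h hxa hxb hx _ D.P2.start_mem_support
    · exact (D.swap23.swap12).propagate_mem CP h hxa hxb hx _ D.P3.start_mem_support
  exact hva haX

/-- If `X = P2.support ∪ P3.support` then the induced graph is Hamiltonian. -/
lemma ham_of_both {X : Set V}
    (hX2 : ∀ y ∈ D.P2.support, y ∈ X) (hX3 : ∀ y ∈ D.P3.support, y ∈ X)
    (hXsub : ∀ x ∈ X, x ∈ D.P2.support ∨ x ∈ D.P3.support) :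
    IsHamiltonianGraph (G.induce X) := by
  have hcyc : (D.P2.append D.P3.reverse).IsCycle := (D.swap12.swap23).cycle12
  have hsupp : ∀ z ∈ (D.P2.append D.P3.reverse).support, z ∈ X := by
    intro z hz
    rw [Walk.support_append, List.mem_append] at hz
    rcases hz with hz | hz
    · exact hX2 z hz
    · refine hX3 z ?_
      have := List.mem_of_mem_tail hz
      rwa [Walk.support_reverse, List.mem_reverse] at this
  have hXsup : ∀ x ∈ X, x ∈ (D.P2.append D.P3.reverse).support := by
    intro x hx
    rw [Walk.support_append, List.mem_append]
    rcases hXsub x hx with h | h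
    · exact Or.inl h
    · by_cases hxb : x = D.b
      · exact Or.inl (hxb ▸ D.P2.end_mem_support)
      · right
        have hxr : x ∈ D.P3.reverse.support := by
          rwa [Walk.support_reverse, List.mem_reverse]
        rw [Walk.support_eq_cons D.P3.reverse, List.mem_cons] at hxr
        rcases hxr with h' | h'
        · exact absurd h' hxb
        · exact h'
  refine ⟨⟨D.a, hX2 _ D.P2.start_mem_support⟩, induceWalk _ hsupp, induceWalk_isCycle _ hsupp hcyc, ?_⟩
  intro y
  have hy : y.val ∈ (D.P2.append D.P3.reverse).support := hXsup y.val y.prop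
  rw [← induceWalk_support _ hsupp, List.mem_map] at hy
  obtain ⟨y', hy', hyy⟩ := hy
  rwa [show y = y' from Subtype.ext hyy.symm]

lemma ham_interior_aux {X : Set V}
    (CP : ∀ x ∈ X, ∃ y z, y ≠ z ∧ y ∈ X ∧ z ∈ X ∧ G.Adj x y ∧ G.Adj x z)
    (hcard : 3 ≤ Nat.card X) {v : V}
    (hv1 : v ∈ D.P1.support) (hvX : v ∉ X)
    (h2i : ∃ x ∈ X, x ∈ D.P2.support ∧ x ≠ D.a ∧ x ≠ D.b) :
    IsHamiltonianGraph (G.induce X) := by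
  classical
  obtain ⟨x2, hx2X, hx2s, hx2a, hx2b⟩ := h2i
  have hX2 : ∀ y ∈ D.P2.support, y ∈ X := D.swap12.propagate_mem CP hx2s hx2a hx2b hx2X
  -- no internal vertex of P1 lies in X
  have hno1 : ∀ x ∈ X, x ∈ D.P1.support → x = D.a ∨ x = D.b := by
    intro x hx hxs
    by_contra hc
    push_neg at hc
    exact hvX (D.propagate_mem CP hxs hc.1 hc.2 hx _ hv1)
  by_cases h3i : ∃ x ∈ X, x ∈ D.P3.support ∧ x ≠ D.a ∧ x ≠ D.b
  · obtain ⟨x3, hx3X, hx3s, hx3a, hx3b⟩ := h3i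
    have hX3 : ∀ y ∈ D.P3.support, y ∈ X :=
      (D.swap23.swap12).propagate_mem CP hx3s hx3a hx3b hx3X
    refine D.ham_of_both hX2 hX3 ?_
    intro x hx
    rcases D.cover x with h | h | h
    · rcases hno1 x hx h with h' | h'
      · exact Or.inl (h' ▸ D.P2.start_mem_support)
      · exact Or.inl (h' ▸ D.P2.end_mem_support)
    · exact Or.inl h
    · exact Or.inr h
  · -- X = P2.support : contradiction with minimum degree of a
    exfalso
    push_neg at h3i
    have hXeq : ∀ x ∈ X, x ∈ D.P2.support := by
      intro x hx
      rcases D.cover x with h | h | h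
      · rcases hno1 x hx h with h' | h'
        · exact h' ▸ D.P2.start_mem_support
        · exact h' ▸ D.P2.end_mem_support
      · exact h
      · by_cases hxa : x = D.a
        · exact hxa ▸ D.P2.start_mem_support
        · exact (h3i x hx h hxa) ▸ D.P2.end_mem_support
    have haX : D.a ∈ X := hX2 _ D.P2.start_mem_support
    obtain ⟨y, z, hyz, hyX, hzX, hy, hz⟩ := CP _ haX
    have hc1 : ∀ t, t ∈ X → t ≠ D.P1.getVert 1 := by
      intro t ht h'
      subst h'
      rcases D.d12 _ (myGetVert_mem_support _ _) (hXeq _ ht) with h' | h'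
      · exact D.getVert1_ne_a h'
      · exact D.getVert1_ne_b h'
    have hc3 : ∀ t, t ∈ X → t ≠ D.P3.getVert 1 := by
      intro t ht h'
      subst h'
      rcases D.d23 _ (hXeq _ ht) (myGetVert_mem_support _ _) with h' | h'
      · exact (D.swap23.swap12).getVert1_ne_a h'
      · exact (D.swap23.swap12).getVert1_ne_b h'
    have hy' : y = D.P2.getVert 1 := by
      rcases D.a_nbrs hy with h | h | h
      · exact absurd h (hc1 y hyX)
      · exact h
      · exact absurd h (hc3 y hyX)
    have hz' : z = D.P2.getVert 1 := by
      rcases D.a_nbrs hz with h | h | h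
      · exact absurd h (hc1 z hzX)
      · exact h
      · exact absurd h (hc3 z hzX)
    exact hyz (hy'.trans hz'.symm)

lemma ham_interior {X : Set V}
    (CP : ∀ x ∈ X, ∃ y z, y ≠ z ∧ y ∈ X ∧ z ∈ X ∧ G.Adj x y ∧ G.Adj x z)
    (hcard : 3 ≤ Nat.card X) {v : V}
    (hv1 : v ∈ D.P1.support) (hvX : v ∉ X) :
    IsHamiltonianGraph (G.induce X) := by
  classical
  have hno1 : ∀ x ∈ X, x ∈ D.P1.support → x = D.a ∨ x = D.b := by
    intro x hx hxs
    by_contra hc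
    push_neg at hc
    exact hvX (D.propagate_mem CP hxs hc.1 hc.2 hx _ hv1)
  by_cases h2i : ∃ x ∈ X, x ∈ D.P2.support ∧ x ≠ D.a ∧ x ≠ D.b
  · exact D.ham_interior_aux CP hcard hv1 hvX h2i
  · by_cases h3i : ∃ x ∈ X, x ∈ D.P3.support ∧ x ≠ D.a ∧ x ≠ D.b
    · refine D.swap23.ham_interior_aux CP hcard hv1 hvX ?_
      exact h3i
    · -- X ⊆ {a, b} : contradicts the cardinality
      exfalso
      push_neg at h2i h3i
      have hsub : X ⊆ {D.a, D.b} := by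
        intro x hx
        rcases D.cover x with h | h | h
        · rcases hno1 x hx h with h' | h' <;> simp [h']
        · by_cases hxa : x = D.a
          · simp [hxa]
          · simp [h2i x hx h hxa]
        · by_cases hxa : x = D.a
          · simp [hxa]
          · simp [h3i x hx h hxa]
      have hle := Set.ncard_le_ncard hsub ((Set.finite_singleton D.b).insert D.a)
      have h2 := Set.ncard_insert_le D.a ({D.b} : Set V)
      rw [Set.ncard_singleton] at h2
      rw [Nat.card_coe_set_eq] at hcard
      omega

end TD

lemma subSingleton_card {X : Set V} {c : V} (hcard : 3 ≤ Nat.card ↑X)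
    (h : ∀ x ∈ X, x = c) : False := by
  have hsub : X ⊆ {c} := fun x hx => h x hx
  have hle := Set.ncard_le_ncard hsub (Set.finite_singleton c)
  rw [Set.ncard_singleton] at hle
  rw [Nat.card_coe_set_eq] at hcard
  omega


end ThetaAux

/-- Every theta is an HC-obstruction. -/
theorem theta_isHCObstruction {V : Type u} [Fintype V] (G : SimpleGraph V)
    (hG : IsTheta G) : IsHCObstruction G := by
  classical
  obtain ⟨a, b, P1, P2, P3, hab, h1, h2, h3, l1, l2, l3, d12, d13, d23, cover, edge⟩ := hG
  let D : TD G := ⟨a, b, P1, P2, P3, hab, h1, h2, h3, l1, l2, l3, d12, d13, d23, cover, edge⟩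
  refine ⟨⟨D.card3, D.conn, ?_⟩, D.not_ham, ?_⟩
  · intro v
    by_cases hva : v = D.a
    · subst hva; exact D.del_a
    · by_cases hvb : v = D.b
      · subst hvb; exact D.rev.del_a
      · rcases D.cover v with h | h | h
        · exact D.del_interior v h hva hvb
        · exact D.swap12.del_interior v h hva hvb
        · exact (D.swap23.swap12).del_interior v h hva hvb
  · intro X hX
    by_cases htc : TwoConnected (G.induce X)
    · right
      obtain ⟨hcard, hconn, hdel⟩ := htc
      have CP : ∀ x ∈ X, ∃ y z, y ≠ z ∧ y ∈ X ∧ z ∈ X ∧ G.Adj x y ∧ G.Adj x z := by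
        intro x hx
        obtain ⟨y, z, hyz, hy, hz⟩ := twoConnected_min_degree hcard hconn hdel ⟨x, hx⟩
        exact ⟨y.val, z.val, fun hh => hyz (Subtype.ext hh), y.prop, z.prop,
          (by exact hy), (by exact hz)⟩
      rcases (Set.ne_univ_iff_exists_notMem X).mp hX with ⟨v, hv⟩
      rcases D.cover v with h | h | h
      · exact D.ham_interior CP hcard h hv
      · exact D.swap12.ham_interior CP hcard h hv
      · exact (D.swap23.swap12).ham_interior CP hcard h hv
    · exact Or.inl htc
end

section
/- Every theta+ is an HC-obstruction: every theta+ is 2-connected, has no Hamiltonian cycle, and every induced subgraph of a theta+ either equals the whole graph, is not 2-connected, or is Hamiltonian. -/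
open SimpleGraph

universe u

variable {V : Type u}

section ThetaPlusAux

variable {G : SimpleGraph V}

private lemma aux_support_eq_map_getVert {u v : V} (p : G.Walk u v) :
    p.support = (List.range (p.length + 1)).map p.getVert := by
  induction p with
  | nil => simp [Walk.getVert]
  | cons h q ih =>
    rw [Walk.support_cons, ih, Walk.length_cons, List.range_succ_eq_map (n := q.length + 1),
      List.map_cons, List.map_map]
    congr 1

private lemma aux_path_getVert_inj {u v : V} {p : G.Walk u v} (hp : p.IsPath) {i j : ℕ}
    (hi : i ≤ p.length) (hj : j ≤ p.length) (h : p.getVert i = p.getVert j) : i = j := by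
  have hnd := hp.support_nodup
  rw [aux_support_eq_map_getVert] at hnd
  exact List.inj_on_of_nodup_map hnd (List.mem_range.2 (by omega))
    (List.mem_range.2 (by omega)) h

private lemma aux_cycle_getVert_inj {r : V} {C : G.Walk r r} (hC : C.IsCycle) {i j : ℕ}
    (hi0 : 1 ≤ i) (hi : i ≤ C.length) (hj0 : 1 ≤ j) (hj : j ≤ C.length)
    (h : C.getVert i = C.getVert j) : i = j := by
  have hnd := hC.support_nodup
  rw [aux_support_eq_map_getVert, List.range_succ_eq_map, List.map_cons, List.tail_cons,
    List.map_map] at hnd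
  have := List.inj_on_of_nodup_map hnd (x := i - 1) (List.mem_range.2 (by omega))
    (y := j - 1) (List.mem_range.2 (by omega))
  simp only [Function.comp, Nat.succ_eq_add_one] at this
  have h' : C.getVert (i - 1 + 1) = C.getVert (j - 1 + 1) := by
    rw [Nat.sub_add_cancel hi0, Nat.sub_add_cancel hj0]; exact h
  have := this h'
  omega

private lemma aux_mem_edges_iff {u v x y : V} {p : G.Walk u v} :
    s(x, y) ∈ p.edges ↔ ∃ i, i < p.length ∧ s(p.getVert i, p.getVert (i + 1)) = s(x, y) := by
  rw [← Walk.mem_edges_toSubgraph, Subgraph.mem_edgeSet, Walk.toSubgraph_adj_iff]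
  constructor
  · rintro ⟨i, h1, h2⟩; exact ⟨i, h2, h1⟩
  · rintro ⟨i, h1, h2⟩; exact ⟨i, h2, h1⟩

/-- a path of length ≥ 2 does not contain the edge between its endpoints -/
private lemma aux_no_end_edge {a b : V} {p : G.Walk a b} (hp : p.IsPath) (hl : 2 ≤ p.length) :
    s(a, b) ∉ p.edges := by
  intro h
  rw [aux_mem_edges_iff] at h
  obtain ⟨i, hil, he⟩ := h
  rw [Sym2.eq_iff] at he
  rcases he with ⟨h1, h2⟩ | ⟨h1, h2⟩
  · have : i = 0 := aux_path_getVert_inj hp (by omega) (by omega)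
      (by rw [h1, Walk.getVert_zero])
    subst this
    have : (1 : ℕ) = p.length := aux_path_getVert_inj hp (by omega) le_rfl
      (by rw [h2, Walk.getVert_length])
    omega
  · have : i = p.length := aux_path_getVert_inj hp (by omega) le_rfl
      (by rw [h1, Walk.getVert_length])
    omega

private def auxLift {X : Set V} :
    ∀ {u v : V} (p : G.Walk u v) (hu : u ∈ X) (hv : v ∈ X)
      (_ : ∀ x ∈ p.support, x ∈ X), (G.induce X).Walk ⟨u, hu⟩ ⟨v, hv⟩
  | _, _, Walk.nil, _, _, _ => Walk.nil
  | _, _, Walk.cons h q, _, hv, hs =>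
      Walk.cons (by simpa using h)
        (auxLift q (hs _ (by simp)) hv fun x hx => hs x (by simp [hx]))

private lemma auxLift_support {X : Set V} :
    ∀ {u v : V} (p : G.Walk u v) (hu : u ∈ X) (hv : v ∈ X)
      (hs : ∀ x ∈ p.support, x ∈ X),
      (auxLift p hu hv hs).support.map Subtype.val = p.support
  | _, _, Walk.nil, _, _, _ => by simp [auxLift]
  | _, _, Walk.cons h q, hu, hv, hs => by
      simp only [auxLift, Walk.support_cons, List.map_cons]
      rw [auxLift_support q]

private lemma auxLift_edges {X : Set V} :
    ∀ {u v : V} (p : G.Walk u v) (hu : u ∈ X) (hv : v ∈ X)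
      (hs : ∀ x ∈ p.support, x ∈ X),
      (auxLift p hu hv hs).edges.map (Sym2.map Subtype.val) = p.edges
  | _, _, Walk.nil, _, _, _ => by simp [auxLift]
  | _, _, Walk.cons h q, hu, hv, hs => by
      simp only [auxLift, Walk.edges_cons, List.map_cons]
      rw [auxLift_edges q]
      rfl

private lemma auxLift_length {X : Set V} :
    ∀ {u v : V} (p : G.Walk u v) (hu : u ∈ X) (hv : v ∈ X)
      (hs : ∀ x ∈ p.support, x ∈ X), (auxLift p hu hv hs).length = p.length
  | _, _, Walk.nil, _, _, _ => by simp [auxLift]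
  | _, _, Walk.cons h q, hu, hv, hs => by
      simp only [auxLift, Walk.length_cons]
      rw [auxLift_length q]

private lemma aux_reachable_of_walk {X : Set V} {u v : V} (p : G.Walk u v)
    (hu : u ∈ X) (hv : v ∈ X) (hs : ∀ x ∈ p.support, x ∈ X) :
    (G.induce X).Reachable ⟨u, hu⟩ ⟨v, hv⟩ :=
  ⟨auxLift p hu hv hs⟩

private lemma aux_induce_connected {X : Set V} {x0 : V} (h0 : x0 ∈ X)
    (h : ∀ x (hx : x ∈ X), (G.induce X).Reachable ⟨x, hx⟩ ⟨x0, h0⟩) :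
    (G.induce X).Connected := by
  rw [connected_iff_exists_forall_reachable]
  exact ⟨⟨x0, h0⟩, fun w => (h w.1 w.2).symm⟩

private lemma aux_ham_of_cycle {X : Set V} {r : V} (C : G.Walk r r) (hC : C.IsCycle)
    (hsub : ∀ x ∈ C.support, x ∈ X) (hcov : ∀ x ∈ X, x ∈ C.support) :
    IsHamiltonianGraph (G.induce X) := by
  have hr : r ∈ X := hsub r C.start_mem_support
  refine ⟨⟨r, hr⟩, auxLift C hr hr hsub, ?_, ?_⟩
  · rw [Walk.isCycle_def, Walk.isTrail_def]
    refine ⟨?_, ?_, ?_⟩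
    · have := hC.isTrail.edges_nodup
      rw [← auxLift_edges C hr hr hsub] at this
      exact this.of_map _
    · intro hnil
      have h3 := hC.three_le_length
      have := auxLift_length C hr hr hsub
      rw [hnil] at this
      simp at this
      omega
    · have := hC.support_nodup
      rw [← auxLift_support C hr hr hsub, ← List.map_tail] at this
      exact this.of_map _
  · intro x
    have hx : (x : V) ∈ C.support := hcov x x.2
    rw [← auxLift_support C hr hr hsub] at hx
    obtain ⟨y, hy, hyx⟩ := List.mem_map.mp hx
    rwa [Subtype.ext hyx] at hy

private lemma aux_exists_two_nbrs {W : Type*} {H : SimpleGraph W} (h : TwoConnected H)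
    (v : W) : ∃ x y, x ≠ y ∧ H.Adj v x ∧ H.Adj v y := by
  classical
  obtain ⟨hcard, hconn, hdel⟩ := h
  have hfin : Finite W := by
    by_contra hinf
    rw [not_finite_iff_infinite] at hinf
    rw [Nat.card_eq_zero_of_infinite] at hcard
    omega
  letI hfty : Fintype W := Fintype.ofFinite W
  rw [Nat.card_eq_fintype_card] at hcard
  have h2 : 2 < Fintype.card W := by omega
  obtain ⟨p, q, r, hpq, hpr, hqr⟩ := Fintype.two_lt_card_iff.mp h2
  -- some vertex distinct from v
  have hu : ∃ u, u ≠ v := by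
    rcases eq_or_ne p v with rfl | hp
    · exact ⟨q, fun h => hpq h.symm⟩
    · exact ⟨p, hp⟩
  obtain ⟨u, huv⟩ := hu
  obtain ⟨p0⟩ := hconn.preconnected v u
  have hnil : ¬ p0.Nil := by
    intro hn
    exact huv (Walk.Nil.eq hn).symm
  set x := p0.getVert 1 with hxdef
  have hadj : H.Adj v x := p0.adj_snd hnil
  by_contra hno
  push_neg at hno
  have hall : ∀ y, H.Adj v y → y = x := by
    intro y hy
    by_contra hyx
    exact hno y x hyx hy hadj
  have hvx : v ≠ x := hadj.ne
  -- find w' ∉ {v, x}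
  have hw' : ∃ w', w' ≠ v ∧ w' ≠ x := by
    by_contra hcon
    push_neg at hcon
    have hp := hcon p
    have hq := hcon q
    have hr := hcon r
    rcases eq_or_ne p v with h1 | h1 <;> rcases eq_or_ne q v with h2 | h2 <;>
      rcases eq_or_ne r v with h3 | h3 <;>
      first
        | (exact hpq (h1.trans h2.symm))
        | (exact hpr (h1.trans h3.symm))
        | (exact hqr (h2.trans h3.symm))
        | (first
            | exact hpq ((hp h1).trans (hq h2).symm)
            | exact hpr ((hp h1).trans (hr h3).symm)
            | exact hqr ((hq h2).trans (hr h3).symm))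
  obtain ⟨w', hw'v, hw'x⟩ := hw'
  have hconn' := hdel x
  have hvmem : v ∈ ({x}ᶜ : Set W) := by simpa using hvx
  have hwmem : w' ∈ ({x}ᶜ : Set W) := by simpa using hw'x
  obtain ⟨p1⟩ := hconn'.preconnected ⟨v, hvmem⟩ ⟨w', hwmem⟩
  have hnil1 : ¬ p1.Nil := by
    intro hn
    have := Walk.Nil.eq hn
    rw [Subtype.mk_eq_mk] at this
    exact hw'v this.symm
  have hadj1 := p1.adj_snd hnil1
  have : H.Adj v (p1.getVert 1).val := by
    simpa using hadj1
  have := hall _ this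
  exact (p1.getVert 1).2 (by simpa using this)

-- pretend imports from previous parts
/-- an internal vertex of a path is in the support and differs from the endpoints -/
private lemma aux_internal_mem {a b : V} {p : G.Walk a b} (hp : p.IsPath) {k : ℕ}
    (hk0 : 0 < k) (hkl : k < p.length) :
    p.getVert k ∈ p.support ∧ p.getVert k ≠ a ∧ p.getVert k ≠ b := by
  refine ⟨Walk.mem_support_iff_exists_getVert.mpr ⟨k, rfl, by omega⟩, ?_, ?_⟩
  · intro h
    have : k = 0 := aux_path_getVert_inj hp (by omega) (by omega)
      (by rw [h, Walk.getVert_zero])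
    omega
  · intro h
    have : k = p.length := aux_path_getVert_inj hp (by omega) le_rfl
      (by rw [h, Walk.getVert_length])
    omega

/-- given that all G-edges at internal vertices of `p` are edges of `p`,
the G-neighbors of an internal vertex are its two path-neighbors -/
private lemma aux_pathnbr {a b : V} {p : G.Walk a b} (hp : p.IsPath)
    (hIE : ∀ v x, v ∈ p.support → v ≠ a → v ≠ b → G.Adj v x → s(v, x) ∈ p.edges)
    {k : ℕ} (hk0 : 0 < k) (hkl : k < p.length) {x : V}
    (hadj : G.Adj (p.getVert k) x) :
    x = p.getVert (k - 1) ∨ x = p.getVert (k + 1) := by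
  obtain ⟨hmem, hna, hnb⟩ := aux_internal_mem hp hk0 hkl
  have he := hIE _ x hmem hna hnb hadj
  rw [aux_mem_edges_iff] at he
  obtain ⟨i, hil, hei⟩ := he
  rw [Sym2.eq_iff] at hei
  rcases hei with ⟨h1, h2⟩ | ⟨h1, h2⟩
  · have : i = k := aux_path_getVert_inj hp (by omega) (by omega) h1
    subst this
    right; exact h2.symm
  · have : i + 1 = k := aux_path_getVert_inj hp (by omega) (by omega) h2
    left
    rw [← this]
    simp [h1]

private lemma aux_path_nbrs_adj {a b : V} {p : G.Walk a b} (hp : p.IsPath) {k : ℕ}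
    (hk0 : 0 < k) (hkl : k < p.length) :
    G.Adj (p.getVert k) (p.getVert (k - 1)) ∧ G.Adj (p.getVert k) (p.getVert (k + 1)) ∧
      p.getVert (k - 1) ≠ p.getVert (k + 1) := by
  refine ⟨?_, p.adj_getVert_succ hkl, ?_⟩
  · have := p.adj_getVert_succ (i := k - 1) (by omega)
    rw [Nat.sub_add_cancel hk0] at this
    exact this.symm
  · intro h
    have : k - 1 = k + 1 := aux_path_getVert_inj hp (by omega) (by omega) h
    omega

/-- edges at the root of a cycle -/
private lemma aux_cycle_root_nbr {r x : V} {C : G.Walk r r} (hC : C.IsCycle)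
    (h : s(r, x) ∈ C.edges) : x = C.getVert 1 ∨ x = C.getVert (C.length - 1) := by
  have h3 := hC.three_le_length
  rw [aux_mem_edges_iff] at h
  obtain ⟨i, hil, hei⟩ := h
  rw [Sym2.eq_iff] at hei
  rcases hei with ⟨h1, h2⟩ | ⟨h1, h2⟩
  · rcases Nat.eq_zero_or_pos i with rfl | hi0
    · left; exact h2.symm
    · have : i = C.length := aux_cycle_getVert_inj hC (by omega) (by omega) (by omega) le_rfl
        (by rw [h1, Walk.getVert_length])
      omega
  · have : i + 1 = C.length := aux_cycle_getVert_inj hC (by omega) (by omega) (by omega) le_rfl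
      (by rw [h2, Walk.getVert_length])
    right
    rw [← this]
    simp [h1]

private lemma aux_cycle_root_edges {r : V} {C : G.Walk r r} (hC : C.IsCycle) :
    s(r, C.getVert 1) ∈ C.edges ∧ s(r, C.getVert (C.length - 1)) ∈ C.edges ∧
      C.getVert 1 ≠ C.getVert (C.length - 1) := by
  have h3 := hC.three_le_length
  refine ⟨?_, ?_, ?_⟩
  · rw [aux_mem_edges_iff]
    exact ⟨0, by omega, by rw [Walk.getVert_zero]⟩
  · rw [aux_mem_edges_iff]
    refine ⟨C.length - 1, by omega, ?_⟩
    rw [Nat.sub_add_cancel (by omega), Walk.getVert_length, Sym2.eq_swap]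
  · intro h
    have : (1 : ℕ) = C.length - 1 := aux_cycle_getVert_inj hC (by omega) (by omega)
      (by omega) (by omega) h
    omega

/-- in a cycle, a vertex whose G-neighbors are exactly {n₁, n₂} has both incident
edges in the cycle -/
private lemma aux_cycle_forced_edges {r v n₁ n₂ : V} {C : G.Walk r r} (hC : C.IsCycle)
    (hv : v ∈ C.support)
    (hnbr : ∀ x, G.Adj v x → x = n₁ ∨ x = n₂) (h12 : n₁ ≠ n₂) :
    s(v, n₁) ∈ C.edges ∧ s(v, n₂) ∈ C.edges := by
  classical
  set C' := C.rotate v hv with hC'def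
  have hC' : C'.IsCycle := hC.rotate hv
  have hperm := C.rotate_edges v hv
  obtain ⟨he1, he2, hne⟩ := aux_cycle_root_edges hC'
  have ha1 : G.Adj v (C'.getVert 1) := C'.adj_of_mem_edges he1
  have ha2 : G.Adj v (C'.getVert (C'.length - 1)) := C'.adj_of_mem_edges he2
  have hb1 := hnbr _ ha1
  have hb2 := hnbr _ ha2
  have key : (s(v, n₁) ∈ C'.edges ∧ s(v, n₂) ∈ C'.edges) := by
    rcases hb1 with rfl | rfl <;> rcases hb2 with h | h
    · exact absurd h.symm hne
    · subst h; exact ⟨he1, he2⟩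
    · subst h; exact ⟨he2, he1⟩
    · exact absurd h.symm hne
  exact ⟨hperm.mem_iff.mp key.1, hperm.mem_iff.mp key.2⟩

/-- in a path, no vertex other than the split point lies in both the take and drop parts -/
private lemma aux_take_drop_disjoint [DecidableEq V] {u w : V} {r : G.Walk u w}
    (hr : r.IsPath) {x : V} (hx : x ∈ r.support) {y : V} (hy : y ≠ x)
    (h1 : y ∈ (r.takeUntil x hx).support) (h2 : y ∈ (r.dropUntil x hx).support) : False := by
  have hnd := hr.support_nodup
  rw [← r.take_spec hx, Walk.support_append] at hnd
  have hdisj := List.disjoint_of_nodup_append hnd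
  have h2' : y ∈ (r.dropUntil x hx).support.tail := by
    have := (r.dropUntil x hx).support_eq_cons
    rw [this, List.mem_cons] at h2
    rcases h2 with h2 | h2
    · exact absurd h2 hy
    · exact h2
  exact hdisj h1 h2'

/-- the start vertex avoids the proper drop part -/
private lemma aux_start_not_mem_drop [DecidableEq V] {u w : V} {r : G.Walk u w}
    (hr : r.IsPath) {x : V} (hx : x ∈ r.support) (hux : u ≠ x) :
    u ∉ (r.dropUntil x hx).support := fun h =>
  aux_take_drop_disjoint hr hx hux (r.takeUntil x hx).start_mem_support h

/-- the end vertex avoids the proper take part -/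
private lemma aux_end_not_mem_take [DecidableEq V] {u w : V} {r : G.Walk u w}
    (hr : r.IsPath) {x : V} (hx : x ∈ r.support) (hwx : w ≠ x) :
    w ∉ (r.takeUntil x hx).support := fun h =>
  aux_take_drop_disjoint hr hx hwx h (r.dropUntil x hx).end_mem_support

/-- gluing two internally disjoint paths into a cycle -/
private lemma aux_two_path_cycle {a b : V} {P Q : G.Walk a b}
    (hP : P.IsPath) (hQ : Q.IsPath) (hlP : 2 ≤ P.length) (hlQ : 2 ≤ Q.length)
    (hdisj : ∀ x, x ∈ P.support → x ∈ Q.support → x = a ∨ x = b) :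
    (P.append Q.reverse).IsCycle := by
  have hab : a ≠ b := by
    intro h
    subst h
    have := hP.support_nodup
    have h0 : P.getVert 0 = P.getVert P.length := by
      rw [Walk.getVert_zero, Walk.getVert_length]
    have := aux_path_getVert_inj hP (by omega) le_rfl h0
    omega
  have hQab : s(a, b) ∉ Q.edges := aux_no_end_edge hQ hlQ
  have hPab : s(a, b) ∉ P.edges := aux_no_end_edge hP hlP
  rw [Walk.isCycle_def, Walk.isTrail_def]
  refine ⟨?_, ?_, ?_⟩
  · rw [Walk.edges_append, Walk.edges_reverse]
    refine List.Nodup.append hP.isTrail.edges_nodup (List.nodup_reverse.mpr hQ.isTrail.edges_nodup) ?_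
    intro e heP heQ
    rw [List.mem_reverse] at heQ
    induction e with
    | h x y =>
      have hx : x ∈ P.support := P.fst_mem_support_of_mem_edges heP
      have hy : y ∈ P.support := P.snd_mem_support_of_mem_edges heP
      have hx' : x ∈ Q.support := Q.fst_mem_support_of_mem_edges heQ
      have hy' : y ∈ Q.support := Q.snd_mem_support_of_mem_edges heQ
      have hxy : x ≠ y := (P.adj_of_mem_edges heP).ne
      rcases hdisj x hx hx' with rfl | rfl <;> rcases hdisj y hy hy' with rfl | rfl
      · exact hxy rfl
      · exact hPab heP
      · exact hPab (by rwa [Sym2.eq_swap] at heP)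
      · exact hxy rfl
  · intro h
    have := congrArg Walk.length h
    rw [Walk.length_append, Walk.length_reverse] at this
    simp only [Walk.length_nil] at this
    omega
  · rw [Walk.support_append, Walk.support_reverse]
    rw [P.support_eq_cons, List.cons_append, List.tail_cons]
    have hQr : Q.support.reverse = b :: Q.reverse.support.tail := by
      conv_lhs => rw [← Walk.support_reverse, Walk.support_eq_cons]
    refine List.Nodup.append ?_ ?_ ?_
    · have := hP.support_nodup
      rw [P.support_eq_cons] at this
      exact this.of_cons
    · rw [hQr, List.tail_cons]
      have := hQ.reverse.support_nodup
      rw [Walk.support_eq_cons] at this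
      exact this.of_cons
    · intro y hyP hyQ
      rw [hQr, List.tail_cons] at hyQ
      have hyP' : y ∈ P.support := by rw [P.support_eq_cons]; exact List.mem_cons_of_mem _ hyP
      have hyQ' : y ∈ Q.support := by
        have : y ∈ Q.reverse.support := by
          rw [Walk.support_eq_cons]
          exact List.mem_cons_of_mem _ hyQ
        rwa [Walk.support_reverse, List.mem_reverse] at this
      rcases hdisj y hyP' hyQ' with rfl | rfl
      · -- a ∈ P.support.tail contradicts nodup
        have := hP.support_nodup
        rw [P.support_eq_cons] at this
        exact (List.nodup_cons.mp this).1 hyP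
      · have := hQ.reverse.support_nodup
        rw [Walk.support_eq_cons] at this
        exact (List.nodup_cons.mp this).1 hyQ

/-- closing a long path with the endpoint edge gives a cycle -/
private lemma aux_path_edge_cycle {a b : V} {P : G.Walk a b} (hP : P.IsPath)
    (hl : 2 ≤ P.length) (hadj : G.Adj b a) :
    (Walk.cons hadj P).IsCycle := by
  apply SimpleGraph.Path.cons_isCycle ⟨P, hP⟩ hadj
  intro h
  exact aux_no_end_edge hP hl (by rwa [Sym2.eq_swap] at h)

/-- a vertex with at most one potential neighbor inside X kills 2-connectivity -/
private lemma aux_boundary {a b : V} {P : G.Walk a b}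
    (hP : P.IsPath)
    (hIE : ∀ v x, v ∈ P.support → v ≠ a → v ≠ b → G.Adj v x → s(v, x) ∈ P.edges)
    {X : Set V} {k : ℕ} (hk0 : 0 < k) (hkl : k < P.length)
    (hkX : P.getVert k ∈ X)
    (hmiss : P.getVert (k - 1) ∉ X ∨ P.getVert (k + 1) ∉ X) :
    ¬ TwoConnected (G.induce X) := by
  intro h2
  obtain ⟨x, y, hxy, hx, hy⟩ := aux_exists_two_nbrs h2 ⟨P.getVert k, hkX⟩
  have hx' : G.Adj (P.getVert k) x.val := by simpa using hx
  have hy' : G.Adj (P.getVert k) y.val := by simpa using hy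
  have hxn := aux_pathnbr hP hIE hk0 hkl hx'
  have hyn := aux_pathnbr hP hIE hk0 hkl hy'
  apply hxy
  apply Subtype.ext
  rcases hmiss with hm | hm
  · rcases hxn with h | h
    · exact absurd (h ▸ x.2) hm
    · rcases hyn with h' | h'
      · exact absurd (h' ▸ y.2) hm
      · rw [h, h']
  · rcases hxn with h | h
    · rcases hyn with h' | h'
      · rw [h, h']
      · exact absurd (h' ▸ y.2) hm
    · exact absurd (h ▸ x.2) hm

private lemma aux_not2conn_noStart {a b : V} {P Q R : G.Walk a b}
    (hP : P.IsPath) (hQ : Q.IsPath) (hR : R.IsPath)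
    (hIEP : ∀ v x, v ∈ P.support → v ≠ a → v ≠ b → G.Adj v x → s(v, x) ∈ P.edges)
    (hIEQ : ∀ v x, v ∈ Q.support → v ≠ a → v ≠ b → G.Adj v x → s(v, x) ∈ Q.edges)
    (hIER : ∀ v x, v ∈ R.support → v ≠ a → v ≠ b → G.Adj v x → s(v, x) ∈ R.edges)
    (hcov : ∀ x, x ∈ P.support ∨ x ∈ Q.support ∨ x ∈ R.support)
    {X : Set V} (haX : a ∉ X) : ¬ TwoConnected (G.induce X) := by
  classical
  intro h2
  have hcard := h2.1
  rw [Nat.card_coe_set_eq] at hcard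
  -- find v ∈ X with v ≠ b
  have hvb : ∃ v ∈ X, v ≠ b := by
    by_contra hcon
    push_neg at hcon
    have hsub : X ⊆ {b} := fun v hv => hcon v hv
    have := Set.ncard_le_ncard hsub (Set.finite_singleton b)
    rw [Set.ncard_singleton] at this
    omega
  obtain ⟨v, hvX, hvb⟩ := hvb
  have hva : v ≠ a := fun h => haX (h ▸ hvX)
  have key : ∀ (S : G.Walk a b), S.IsPath →
      (∀ u x, u ∈ S.support → u ≠ a → u ≠ b → G.Adj u x → s(u, x) ∈ S.edges) →
      v ∈ S.support → False := by
    intro S hS hIES hvS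
    obtain ⟨n, hgv, hnle⟩ := Walk.mem_support_iff_exists_getVert.mp hvS
    have hn0 : 0 < n := by
      rcases Nat.eq_zero_or_pos n with rfl | h
      · rw [Walk.getVert_zero] at hgv; exact absurd hgv.symm hva
      · exact h
    have hnl : n < S.length := by
      rcases Nat.lt_or_ge n S.length with h | h
      · exact h
      · have : n = S.length := by omega
        rw [this, Walk.getVert_length] at hgv
        exact absurd hgv.symm hvb
    have hex : ∃ k, 0 < k ∧ k < S.length ∧ S.getVert k ∈ X := ⟨n, hn0, hnl, hgv ▸ hvX⟩
    have hmX := (Nat.find_spec hex).2.2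
    have hm0 := (Nat.find_spec hex).1
    have hml := (Nat.find_spec hex).2.1
    have hprev : S.getVert (Nat.find hex - 1) ∉ X := by
      rcases Nat.lt_or_ge (Nat.find hex) 2 with h | h
      · have : Nat.find hex - 1 = 0 := by omega
        rw [this, Walk.getVert_zero]
        exact haX
      · intro hmem
        exact Nat.find_min hex (show Nat.find hex - 1 < Nat.find hex by omega)
          ⟨by omega, by omega, hmem⟩
    exact aux_boundary hS hIES hm0 hml hmX (Or.inl hprev) h2
  rcases hcov v with h | h | h
  exacts [key P hP hIEP h, key Q hQ hIEQ h, key R hR hIER h]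

private lemma aux_gap {a b : V} {P : G.Walk a b} (hP : P.IsPath)
    (hIE : ∀ v x, v ∈ P.support → v ≠ a → v ≠ b → G.Adj v x → s(v, x) ∈ P.edges)
    {X : Set V}
    (hkeep : ∃ k, 0 < k ∧ k < P.length ∧ P.getVert k ∈ X)
    (hmiss : ∃ k, 0 < k ∧ k < P.length ∧ P.getVert k ∉ X) :
    ¬ TwoConnected (G.induce X) := by
  classical
  obtain ⟨hm0, hml, hmX⟩ := Nat.find_spec hmiss
  by_cases h2m : 2 ≤ Nat.find hmiss
  · have hkept : P.getVert (Nat.find hmiss - 1) ∈ X := by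
      by_contra h
      exact Nat.find_min hmiss (show Nat.find hmiss - 1 < Nat.find hmiss by omega)
        ⟨by omega, by omega, h⟩
    apply aux_boundary hP hIE (k := Nat.find hmiss - 1) (by omega) (by omega) hkept
    right
    rw [Nat.sub_add_cancel (by omega)]
    exact hmX
  · have hm1 : Nat.find hmiss = 1 := by omega
    obtain ⟨hj0, hjl, hjX⟩ := Nat.find_spec hkeep
    have hj2 : 2 ≤ Nat.find hkeep := by
      rcases Nat.lt_or_ge (Nat.find hkeep) 2 with h | h
      · have hj1 : Nat.find hkeep = 1 := by omega
        rw [hj1] at hjX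
        rw [hm1] at hmX
        exact absurd hjX hmX
      · exact h
    have hprev : P.getVert (Nat.find hkeep - 1) ∉ X := fun h =>
      Nat.find_min hkeep (show Nat.find hkeep - 1 < Nat.find hkeep by omega)
        ⟨by omega, by omega, h⟩
    exact aux_boundary hP hIE hj0 hjl hjX (Or.inl hprev)

private lemma aux_conn_del_start {a b : V} {P Q R : G.Walk a b}
    (hP : P.IsPath) (hQ : Q.IsPath) (hR : R.IsPath) (hab : a ≠ b)
    (hcov : ∀ x, x ∈ P.support ∨ x ∈ Q.support ∨ x ∈ R.support) :
    (G.induce ({a}ᶜ : Set V)).Connected := by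
  classical
  have hbmem : b ∈ ({a}ᶜ : Set V) := by simpa using hab.symm
  apply aux_induce_connected hbmem
  intro x hx
  have hxa : x ≠ a := by simpa using hx
  have key : ∀ (S : G.Walk a b), S.IsPath → x ∈ S.support →
      (G.induce ({a}ᶜ : Set V)).Reachable ⟨x, hx⟩ ⟨b, hbmem⟩ := by
    intro S hS hxS
    rcases eq_or_ne x b with rfl | hxb
    · exact Reachable.refl _
    · refine aux_reachable_of_walk (S.dropUntil x hxS) hx hbmem ?_
      intro z hz
      simp only [Set.mem_compl_iff, Set.mem_singleton_iff]
      intro hza; subst hza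
      exact aux_start_not_mem_drop hS hxS (Ne.symm hxa) hz
  rcases hcov x with h | h | h
  exacts [key P hP h, key Q hQ h, key R hR h]

private lemma aux_conn_del_internal {a b : V} {P Q R : G.Walk a b}
    (hP : P.IsPath) (hAdj : G.Adj a b)
    (hcov : ∀ x, x ∈ P.support ∨ x ∈ Q.support ∨ x ∈ R.support)
    {v : V} (hv : v ∈ P.support) (hva : v ≠ a) (hvb : v ≠ b)
    (hvQ : v ∉ Q.support) (hvR : v ∉ R.support) :
    (G.induce ({v}ᶜ : Set V)).Connected := by
  classical
  have hamem : a ∈ ({v}ᶜ : Set V) := by simpa using Ne.symm hva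
  have hbmem : b ∈ ({v}ᶜ : Set V) := by simpa using Ne.symm hvb
  apply aux_induce_connected hamem
  intro x hx
  have hxv : x ≠ v := by simpa using hx
  have hreach_ba : (G.induce ({v}ᶜ : Set V)).Reachable ⟨b, hbmem⟩ ⟨a, hamem⟩ := by
    apply Adj.reachable
    simpa using hAdj.symm
  have hother : ∀ (S : G.Walk a b), x ∈ S.support → v ∉ S.support →
      (G.induce ({v}ᶜ : Set V)).Reachable ⟨x, hx⟩ ⟨a, hamem⟩ := by
    intro S hxS hvS
    refine (aux_reachable_of_walk (S.takeUntil x hxS) hamem hx ?_).symm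
    intro z hz
    simp only [Set.mem_compl_iff, Set.mem_singleton_iff]
    intro hzv; subst hzv
    exact hvS (S.support_takeUntil_subset hxS hz)
  rcases eq_or_ne x a with rfl | hxa
  · exact Reachable.refl _
  rcases eq_or_ne x b with rfl | hxb
  · exact hreach_ba
  rcases hcov x with h | h | h
  · rw [← P.take_spec hv, Walk.mem_support_append_iff] at h
    rcases h with h | h
    · have hrp : (P.takeUntil v hv).IsPath := hP.takeUntil hv
      refine (aux_reachable_of_walk ((P.takeUntil v hv).takeUntil x h) hamem hx ?_).symm
      intro z hz
      simp only [Set.mem_compl_iff, Set.mem_singleton_iff]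
      intro hzv; subst hzv
      exact aux_end_not_mem_take hrp h (Ne.symm hxv) hz
    · have hrp : (P.dropUntil v hv).IsPath := hP.dropUntil hv
      refine Reachable.trans
        (aux_reachable_of_walk ((P.dropUntil v hv).dropUntil x h) hx hbmem ?_) hreach_ba
      intro z hz
      simp only [Set.mem_compl_iff, Set.mem_singleton_iff]
      intro hzv; subst hzv
      exact aux_start_not_mem_drop hrp h (Ne.symm hxv) hz
  · exact hother Q h hvQ
  · exact hother R h hvR

/-- support of a path with endpoints in X and all interior vertices in X is inside X -/
private lemma aux_support_mem_X {a b : V} {S : G.Walk a b} {X : Set V}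
    (haX : a ∈ X) (hbX : b ∈ X)
    (hkeep : ∀ k, 0 < k → k < S.length → S.getVert k ∈ X) :
    ∀ x ∈ S.support, x ∈ X := by
  intro x hx
  obtain ⟨n, hgv, hle⟩ := Walk.mem_support_iff_exists_getVert.mp hx
  rcases Nat.eq_zero_or_pos n with rfl | hn0
  · rw [Walk.getVert_zero] at hgv; exact hgv ▸ haX
  rcases Nat.lt_or_ge n S.length with hnl | hnl
  · exact hgv ▸ hkeep n hn0 hnl
  · have : n = S.length := by omega
    rw [this, Walk.getVert_length] at hgv
    exact hgv ▸ hbX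

private lemma aux_missing_support {a b : V} {S : G.Walk a b} {X : Set V}
    (hmiss : ∀ k, 0 < k → k < S.length → S.getVert k ∉ X) :
    ∀ x ∈ S.support, x ∈ X → x = a ∨ x = b := by
  intro x hx hxX
  obtain ⟨n, hgv, hle⟩ := Walk.mem_support_iff_exists_getVert.mp hx
  rcases Nat.eq_zero_or_pos n with rfl | hn0
  · rw [Walk.getVert_zero] at hgv; exact Or.inl hgv.symm
  rcases Nat.lt_or_ge n S.length with hnl | hnl
  · exact absurd (hgv ▸ hxX) (hmiss n hn0 hnl)
  · have : n = S.length := by omega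
    rw [this, Walk.getVert_length] at hgv
    exact Or.inr hgv.symm

private lemma aux_ham_two_paths {a b : V} {P Q R : G.Walk a b}
    (hQ : Q.IsPath) (hR : R.IsPath) (hlQ : 2 ≤ Q.length) (hlR : 2 ≤ R.length)
    (hQR : ∀ x, x ∈ Q.support → x ∈ R.support → x = a ∨ x = b)
    (hcov : ∀ x, x ∈ P.support ∨ x ∈ Q.support ∨ x ∈ R.support)
    {X : Set V} (haX : a ∈ X) (hbX : b ∈ X)
    (hPmiss : ∀ k, 0 < k → k < P.length → P.getVert k ∉ X)
    (hQkeep : ∀ k, 0 < k → k < Q.length → Q.getVert k ∈ X)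
    (hRkeep : ∀ k, 0 < k → k < R.length → R.getVert k ∈ X) :
    IsHamiltonianGraph (G.induce X) := by
  apply aux_ham_of_cycle (Q.append R.reverse) (aux_two_path_cycle hQ hR hlQ hlR hQR)
  · intro x hxs
    rw [Walk.mem_support_append_iff] at hxs
    rcases hxs with h | h
    · exact aux_support_mem_X haX hbX hQkeep x h
    · rw [Walk.support_reverse, List.mem_reverse] at h
      exact aux_support_mem_X haX hbX hRkeep x h
  · intro x hxX
    rw [Walk.mem_support_append_iff]
    have hmemQ : ∀ y, y ∈ Q.support → y ∈ Q.support ∨ y ∈ R.reverse.support := fun y hy => Or.inl hy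
    have hmemR : ∀ y, y ∈ R.support → y ∈ Q.support ∨ y ∈ R.reverse.support := by
      intro y hy
      right
      rwa [Walk.support_reverse, List.mem_reverse]
    rcases hcov x with h | h | h
    · rcases aux_missing_support hPmiss x h hxX with rfl | rfl
      · exact hmemQ _ Q.start_mem_support
      · exact hmemQ _ Q.end_mem_support
    · exact hmemQ _ h
    · exact hmemR _ h

private lemma aux_ham_one_path {a b : V} {P Q R : G.Walk a b}
    (hR : R.IsPath) (hlR : 2 ≤ R.length) (hAdj : G.Adj a b)
    (hcov : ∀ x, x ∈ P.support ∨ x ∈ Q.support ∨ x ∈ R.support)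
    {X : Set V} (haX : a ∈ X) (hbX : b ∈ X)
    (hPmiss : ∀ k, 0 < k → k < P.length → P.getVert k ∉ X)
    (hQmiss : ∀ k, 0 < k → k < Q.length → Q.getVert k ∉ X)
    (hRkeep : ∀ k, 0 < k → k < R.length → R.getVert k ∈ X) :
    IsHamiltonianGraph (G.induce X) := by
  apply aux_ham_of_cycle (Walk.cons hAdj.symm R) (aux_path_edge_cycle hR hlR hAdj.symm)
  · intro x hxs
    rw [Walk.support_cons, List.mem_cons] at hxs
    rcases hxs with rfl | h
    · exact hbX
    · exact aux_support_mem_X haX hbX hRkeep x h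
  · intro x hxX
    rw [Walk.support_cons, List.mem_cons]
    rcases hcov x with h | h | h
    · rcases aux_missing_support hPmiss x h hxX with rfl | rfl
      · exact Or.inr R.start_mem_support
      · exact Or.inl rfl
    · rcases aux_missing_support hQmiss x h hxX with rfl | rfl
      · exact Or.inr R.start_mem_support
      · exact Or.inl rfl
    · exact Or.inr h

private lemma aux_hIE_reverse {a b : V} {P : G.Walk a b}
    (hIE : ∀ v x, v ∈ P.support → v ≠ a → v ≠ b → G.Adj v x → s(v, x) ∈ P.edges) :
    ∀ v x, v ∈ P.reverse.support → v ≠ b → v ≠ a → G.Adj v x → s(v, x) ∈ P.reverse.edges := by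
  intro v x hv hvb hva hadj
  rw [Walk.support_reverse, List.mem_reverse] at hv
  rw [Walk.edges_reverse, List.mem_reverse]
  exact hIE v x hv hva hvb hadj

end ThetaPlusAux

/-- Every theta⁺ is an HC-obstruction. -/
theorem thetaPlus_isHCObstruction {V : Type u} [Fintype V] (G : SimpleGraph V)
    (hG : IsThetaPlus G) : IsHCObstruction G := by
  classical
  obtain ⟨a, b, P₁, P₂, P₃, hab, hAdj, hp1, hp2, hp3, hl1, hl2, hl3, h12, h13, h23,
    hcov, hE⟩ := hG
  have mkIE : ∀ (P P' P'' : G.Walk a b),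
      (∀ x, x ∈ P.support → x ∈ P'.support → x = a ∨ x = b) →
      (∀ x, x ∈ P.support → x ∈ P''.support → x = a ∨ x = b) →
      (∀ e, e ∈ G.edgeSet → e = s(a, b) ∨ e ∈ P.edges ∨ e ∈ P'.edges ∨ e ∈ P''.edges) →
      ∀ v x, v ∈ P.support → v ≠ a → v ≠ b → G.Adj v x → s(v, x) ∈ P.edges := by
    intro P P' P'' hd1 hd2 hEE v x hv hva hvb hadj
    rcases hEE s(v, x) (G.mem_edgeSet.mpr hadj) with h | h | h | h
    · rw [Sym2.eq_iff] at h
      rcases h with ⟨h1, _⟩ | ⟨h1, _⟩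
      · exact absurd h1 hva
      · exact absurd h1 hvb
    · exact h
    · rcases hd1 v hv (P'.fst_mem_support_of_mem_edges h) with rfl | rfl
      · exact absurd rfl hva
      · exact absurd rfl hvb
    · rcases hd2 v hv (P''.fst_mem_support_of_mem_edges h) with rfl | rfl
      · exact absurd rfl hva
      · exact absurd rfl hvb
  have hIE1 := mkIE P₁ P₂ P₃ h12 h13 hE
  have hIE2 := mkIE P₂ P₁ P₃ (fun x hx hx' => h12 x hx' hx) h23
    (fun e he => by rcases hE e he with h | h | h | h <;> tauto)
  have hIE3 := mkIE P₃ P₁ P₂ (fun x hx hx' => h13 x hx' hx) (fun x hx hx' => h23 x hx' hx)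
    (fun e he => by rcases hE e he with h | h | h | h <;> tauto)
  have hint1 := aux_internal_mem hp1 (k := 1) one_pos (by omega)
  have hint2 := aux_internal_mem hp2 (k := 1) one_pos (by omega)
  have hint3 := aux_internal_mem hp3 (k := 1) one_pos (by omega)
  refine ⟨⟨?_, ?_, ?_⟩, ?_, ?_⟩
  · -- at least three vertices
    rw [Nat.card_eq_fintype_card]
    have := Fintype.two_lt_card_iff.mpr
      ⟨a, b, P₁.getVert 1, hab, Ne.symm hint1.2.1, Ne.symm hint1.2.2⟩
    omega
  · -- connected
    rw [connected_iff_exists_forall_reachable]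
    refine ⟨a, fun w => ?_⟩
    rcases hcov w with h | h | h
    exacts [⟨P₁.takeUntil w h⟩, ⟨P₂.takeUntil w h⟩, ⟨P₃.takeUntil w h⟩]
  · -- deletion of any vertex keeps connectivity
    intro v
    rcases eq_or_ne v a with rfl | hva
    · exact aux_conn_del_start hp1 hp2 hp3 hab hcov
    rcases eq_or_ne v b with rfl | hvb
    · have hcov' : ∀ x, x ∈ P₁.reverse.support ∨ x ∈ P₂.reverse.support ∨
          x ∈ P₃.reverse.support := by
        intro x
        rcases hcov x with h | h | h <;>
          simp only [Walk.support_reverse, List.mem_reverse] <;> tauto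
      exact aux_conn_del_start hp1.reverse hp2.reverse hp3.reverse (Ne.symm hab) hcov'
    rcases hcov v with h | h | h
    · exact aux_conn_del_internal hp1 hAdj hcov h hva hvb
        (fun hvQ => by rcases h12 v h hvQ with rfl | rfl; exacts [hva rfl, hvb rfl])
        (fun hvR => by rcases h13 v h hvR with rfl | rfl; exacts [hva rfl, hvb rfl])
    · exact aux_conn_del_internal (Q := P₁) (R := P₃) hp2 hAdj
        (fun x => by
          rcases hcov x with h' | h' | h'
          exacts [Or.inr (Or.inl h'), Or.inl h', Or.inr (Or.inr h')]) h hva hvb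
        (fun hvQ => by rcases h12 v hvQ h with rfl | rfl; exacts [hva rfl, hvb rfl])
        (fun hvR => by rcases h23 v h hvR with rfl | rfl; exacts [hva rfl, hvb rfl])
    · exact aux_conn_del_internal (Q := P₁) (R := P₂) hp3 hAdj
        (fun x => by
          rcases hcov x with h' | h' | h'
          exacts [Or.inr (Or.inl h'), Or.inr (Or.inr h'), Or.inl h']) h hva hvb
        (fun hvQ => by rcases h13 v hvQ h with rfl | rfl; exacts [hva rfl, hvb rfl])
        (fun hvR => by rcases h23 v hvR h with rfl | rfl; exacts [hva rfl, hvb rfl])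
  · -- not Hamiltonian
    rintro ⟨r, C, hC, hCall⟩
    have forced : ∀ (P : G.Walk a b), P.IsPath →
        (∀ u x, u ∈ P.support → u ≠ a → u ≠ b → G.Adj u x → s(u, x) ∈ P.edges) →
        ∀ k, 0 < k → k < P.length → ∀ x, G.Adj (P.getVert k) x →
          s(P.getVert k, x) ∈ C.edges := by
      intro P hP hIEP k hk0 hkl x hadj
      obtain ⟨hadj1, hadj2, hne⟩ := aux_path_nbrs_adj hP hk0 hkl
      have hforce := aux_cycle_forced_edges hC (hCall _)
        (fun y hy => aux_pathnbr hP hIEP hk0 hkl hy) hne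
      rcases aux_pathnbr hP hIEP hk0 hkl hadj with h | h
      · rw [h]; exact hforce.1
      · rw [h]; exact hforce.2
    have hca : ∀ (P : G.Walk a b), P.IsPath → 2 ≤ P.length →
        (∀ u x, u ∈ P.support → u ≠ a → u ≠ b → G.Adj u x → s(u, x) ∈ P.edges) →
        s(a, P.getVert 1) ∈ C.edges := by
      intro P hP hlP hIEP
      have hadj : G.Adj (P.getVert 1) a := by
        have := P.adj_getVert_succ (i := 0) (by omega)
        rw [Walk.getVert_zero] at this
        exact this.symm
      have := forced P hP hIEP 1 one_pos (by omega) a hadj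
      rwa [Sym2.eq_swap] at this
    have he1 := hca P₁ hp1 hl1 hIE1
    have he2 := hca P₂ hp2 hl2 hIE2
    have he3 := hca P₃ hp3 hl3 hIE3
    have haC : a ∈ C.support := hCall a
    have hC' := hC.rotate haC
    have hperm := C.rotate_edges a haC
    have hmem : ∀ x, s(a, x) ∈ C.edges →
        x = (C.rotate a haC).getVert 1 ∨
          x = (C.rotate a haC).getVert ((C.rotate a haC).length - 1) :=
      fun x hx => aux_cycle_root_nbr hC' (hperm.mem_iff.mpr hx)
    have hb1 := hmem _ he1
    have hb2 := hmem _ he2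
    have hb3 := hmem _ he3
    have hcc : ∀ (P Q : G.Walk a b), P.IsPath → Q.IsPath → 2 ≤ P.length → 2 ≤ Q.length →
        (∀ x, x ∈ P.support → x ∈ Q.support → x = a ∨ x = b) →
        P.getVert 1 ≠ Q.getVert 1 := by
      intro P Q hP hQ hlP hlQ hd h
      have h1 := aux_internal_mem hP (k := 1) one_pos (by omega)
      have h2 := aux_internal_mem hQ (k := 1) one_pos (by omega)
      rcases hd _ h1.1 (h ▸ h2.1) with h' | h'
      · exact h1.2.1 h'
      · exact h1.2.2 h'
    have hcc12 := hcc P₁ P₂ hp1 hp2 hl1 hl2 h12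
    have hcc13 := hcc P₁ P₃ hp1 hp3 hl1 hl3 h13
    have hcc23 := hcc P₂ P₃ hp2 hp3 hl2 hl3 h23
    rcases hb1 with h1 | h1 <;> rcases hb2 with h2 | h2 <;> rcases hb3 with h3 | h3 <;>
      first
        | exact hcc12 (h1.trans h2.symm)
        | exact hcc13 (h1.trans h3.symm)
        | exact hcc23 (h2.trans h3.symm)
  · -- proper induced subgraphs
    intro X hXuniv
    by_cases haX : a ∈ X
    case neg => exact Or.inl (aux_not2conn_noStart hp1 hp2 hp3 hIE1 hIE2 hIE3 hcov haX)
    by_cases hbX : b ∈ X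
    case neg =>
      refine Or.inl (aux_not2conn_noStart hp1.reverse hp2.reverse hp3.reverse
        (aux_hIE_reverse hIE1) (aux_hIE_reverse hIE2) (aux_hIE_reverse hIE3) ?_ hbX)
      intro x
      rcases hcov x with h | h | h <;>
        simp only [Walk.support_reverse, List.mem_reverse] <;> tauto
    have step : ∀ (P : G.Walk a b), P.IsPath →
        (∀ u x, u ∈ P.support → u ≠ a → u ≠ b → G.Adj u x → s(u, x) ∈ P.edges) →
        ¬ TwoConnected (G.induce X) ∨ (∀ k, 0 < k → k < P.length → P.getVert k ∉ X) ∨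
          (∀ k, 0 < k → k < P.length → P.getVert k ∈ X) := by
      intro P hP hIEP
      by_cases hm : ∃ k, 0 < k ∧ k < P.length ∧ P.getVert k ∉ X
      · by_cases hk : ∃ k, 0 < k ∧ k < P.length ∧ P.getVert k ∈ X
        · exact Or.inl (aux_gap hP hIEP hk hm)
        · push_neg at hk
          exact Or.inr (Or.inl fun k h1 h2 => hk k h1 h2)
      · push_neg at hm
        exact Or.inr (Or.inr fun k h1 h2 => hm k h1 h2)
    have leafMMM : (∀ k, 0 < k → k < P₁.length → P₁.getVert k ∉ X) →
        (∀ k, 0 < k → k < P₂.length → P₂.getVert k ∉ X) →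
        (∀ k, 0 < k → k < P₃.length → P₃.getVert k ∉ X) →
        ¬ TwoConnected (G.induce X) := by
      intro hs1 hs2 hs3 h2
      have hcard := h2.1
      rw [Nat.card_coe_set_eq] at hcard
      have hsub : X ⊆ {a, b} := by
        intro x hxX
        have habm : x = a ∨ x = b → x ∈ ({a, b} : Set V) := by
          rintro (rfl | rfl) <;> simp
        rcases hcov x with h | h | h
        · exact habm (aux_missing_support hs1 x h hxX)
        · exact habm (aux_missing_support hs2 x h hxX)
        · exact habm (aux_missing_support hs3 x h hxX)
      have hle := Set.ncard_le_ncard hsub (Set.toFinite _)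
      have hle2 := Set.ncard_insert_le a ({b} : Set V)
      rw [Set.ncard_singleton] at hle2
      omega
    rcases step P₁ hp1 hIE1 with h | hs1 | hs1
    · exact Or.inl h
    · rcases step P₂ hp2 hIE2 with h | hs2 | hs2
      · exact Or.inl h
      · rcases step P₃ hp3 hIE3 with h | hs3 | hs3
        · exact Or.inl h
        · -- miss miss miss
          exact Or.inl (leafMMM hs1 hs2 hs3)
        · -- miss miss keep
          exact Or.inr (aux_ham_one_path hp3 hl3 hAdj hcov haX hbX hs1 hs2 hs3)
      · rcases step P₃ hp3 hIE3 with h | hs3 | hs3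
        · exact Or.inl h
        · -- miss keep miss
          exact Or.inr (aux_ham_one_path (P := P₁) (Q := P₃) (R := P₂) hp2 hl2 hAdj
            (fun x => by
              rcases hcov x with h | h | h
              exacts [Or.inl h, Or.inr (Or.inr h), Or.inr (Or.inl h)])
            haX hbX hs1 hs3 hs2)
        · -- miss keep keep
          exact Or.inr (aux_ham_two_paths hp2 hp3 hl2 hl3 h23 hcov haX hbX hs1 hs2 hs3)
    · rcases step P₂ hp2 hIE2 with h | hs2 | hs2
      · exact Or.inl h
      · rcases step P₃ hp3 hIE3 with h | hs3 | hs3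
        · exact Or.inl h
        · -- keep miss miss
          exact Or.inr (aux_ham_one_path (P := P₂) (Q := P₃) (R := P₁) hp1 hl1 hAdj
            (fun x => by
              rcases hcov x with h | h | h
              exacts [Or.inr (Or.inr h), Or.inl h, Or.inr (Or.inl h)])
            haX hbX hs2 hs3 hs1)
        · -- keep miss keep
          exact Or.inr (aux_ham_two_paths (P := P₂) (Q := P₁) (R := P₃) hp1 hp3 hl1 hl3 h13
            (fun x => by
              rcases hcov x with h | h | h
              exacts [Or.inr (Or.inl h), Or.inl h, Or.inr (Or.inr h)])
            haX hbX hs2 hs1 hs3)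
      · rcases step P₃ hp3 hIE3 with h | hs3 | hs3
        · exact Or.inl h
        · -- keep keep miss
          exact Or.inr (aux_ham_two_paths (P := P₃) (Q := P₁) (R := P₂) hp1 hp2 hl1 hl2 h12
            (fun x => by
              rcases hcov x with h | h | h
              exacts [Or.inr (Or.inl h), Or.inr (Or.inr h), Or.inl h])
            haX hbX hs3 hs1 hs2)
        · -- keep keep keep : X = univ, contradiction
          exact (hXuniv (Set.eq_univ_iff_forall.mpr fun x => by
            rcases hcov x with h | h | h
            exacts [aux_support_mem_X haX hbX hs1 x h, aux_support_mem_X haX hbX hs2 x h,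
              aux_support_mem_X haX hbX hs3 x h])).elim
end

section
/- Every pyramid is an HC-obstruction: every pyramid is 2-connected, has no Hamiltonian cycle, and every induced subgraph of a pyramid either equals the whole graph, is not 2-connected, or is Hamiltonian. -/
open SimpleGraph

universe u

variable {V : Type u}

namespace PyrAux
open SimpleGraph.Walk
variable {G : SimpleGraph V}

lemma path_ends_ne {a b : V} (p : G.Walk a b) (hp : p.IsPath) (hl : 1 ≤ p.length) : a ≠ b := by
  rintro rfl
  cases p with
  | nil => simp at hl
  | cons h q =>
      rw [Walk.cons_isPath_iff] at hp
      exact hp.2 q.end_mem_support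

lemma first_edge_eq {x c : V} (w : G.Walk x c) (hw : w.IsPath) {e : Sym2 V}
    (he : e ∈ w.edges) (hx : x ∈ e) : e = s(x, w.getVert 1) := by
  induction w with
  | nil => simp at he
  | cons h q ih =>
      rw [Walk.edges_cons] at he
      rcases List.mem_cons.1 he with rfl | he'
      · simp [Walk.getVert_cons_succ, Walk.getVert_zero]
      · exfalso
        rw [Walk.cons_isPath_iff] at hw
        induction e using Sym2.inductionOn with
        | hf u v =>
          rcases Sym2.mem_iff.1 hx with rfl | rfl
          · exact hw.2 (Walk.fst_mem_support_of_mem_edges q he')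
          · exact hw.2 (Walk.snd_mem_support_of_mem_edges q he')

lemma first_edge_mem {x c : V} (w : G.Walk x c) (hw : ¬w.Nil) : s(x, w.getVert 1) ∈ w.edges := by
  cases w with
  | nil => simp at hw
  | cons h q => simp [Walk.getVert_cons_succ, Walk.getVert_zero]

lemma getVert_one_ne_end {a b : V} (p : G.Walk a b) (hp : p.IsPath) (h2 : 2 ≤ p.length) :
    p.getVert 1 ≠ b := by
  cases p with
  | nil => simp at h2
  | cons h q =>
      rw [Walk.cons_isPath_iff] at hp
      simp only [Walk.getVert_cons_succ, Walk.getVert_zero]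
      exact path_ends_ne q hp.1 (by simp [Walk.length_cons] at h2; omega)

lemma take_avoid [DecidableEq V] {a b x : V} (p : G.Walk a b) (hp : p.IsPath) (hx : x ∈ p.support)
    (hxb : x ≠ b) : b ∉ (p.takeUntil x hx).support := by
  intro hb
  have hsp : p.support = (p.takeUntil x hx).support ++ (p.dropUntil x hx).support.tail := by
    rw [← Walk.support_append, Walk.take_spec]
  have hnd : p.support.Nodup := hp.2
  rw [hsp, List.nodup_append] at hnd
  have hbd : b ∈ (p.dropUntil x hx).support.tail := by
    have : b ∈ (p.dropUntil x hx).support := Walk.end_mem_support _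
    rw [Walk.support_eq_cons, List.mem_cons] at this
    rcases this with h | h
    · exact absurd h.symm hxb
    · exact h
  exact hnd.2.2 b hb b hbd rfl

lemma drop_avoid [DecidableEq V] {a b x : V} (p : G.Walk a b) (hp : p.IsPath) (hx : x ∈ p.support)
    (hxa : x ≠ a) : a ∉ (p.dropUntil x hx).support := by
  intro ha
  have hsp : p.support = (p.takeUntil x hx).support ++ (p.dropUntil x hx).support.tail := by
    rw [← Walk.support_append, Walk.take_spec]
  have hnd : p.support.Nodup := hp.2
  rw [hsp, List.nodup_append] at hnd
  have had : a ∈ (p.dropUntil x hx).support.tail := by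
    have := Walk.end_mem_support (p.takeUntil x hx)  -- not needed
    have h' : a ∈ (p.dropUntil x hx).support := ha
    rw [Walk.support_eq_cons, List.mem_cons] at h'
    rcases h' with h | h
    · exact absurd h.symm hxa
    · exact h
  exact hnd.2.2 a (Walk.start_mem_support _) a had rfl

lemma internal_nbrs [DecidableEq V] {a b x : V} (p : G.Walk a b) (hp : p.IsPath)
    (hx : x ∈ p.support) (hxa : x ≠ a) (hxb : x ≠ b) :
    ∃ y z : V, y ≠ z ∧ s(x, y) ∈ p.edges ∧ s(x, z) ∈ p.edges ∧
      ∀ e ∈ p.edges, x ∈ e → e = s(x, y) ∨ e = s(x, z) := by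
  set q := p.takeUntil x hx with hq
  set r := p.dropUntil x hx with hr
  have hqp : q.IsPath := hp.takeUntil hx
  have hrp : r.IsPath := hp.dropUntil hx
  have hqnn : ¬q.reverse.Nil := Walk.not_nil_of_ne hxa
  have hrnn : ¬r.Nil := Walk.not_nil_of_ne hxb
  refine ⟨q.reverse.getVert 1, r.getVert 1, ?_, ?_, ?_, ?_⟩
  · -- distinct
    intro hyz
    have hy : q.reverse.getVert 1 ∈ q.support := by
      have := Walk.snd_mem_support_of_mem_edges q.reverse (first_edge_mem q.reverse hqnn)
      rwa [Walk.support_reverse, List.mem_reverse] at this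
    have hz : r.getVert 1 ∈ r.support :=
      Walk.snd_mem_support_of_mem_edges r (first_edge_mem r hrnn)
    have hzx : r.getVert 1 ≠ x := by
      have := Walk.edges_subset_edgeSet r (first_edge_mem r hrnn)
      exact (G.ne_of_adj (G.mem_edgeSet.1 this)).symm
    have hsp : p.support = q.support ++ r.support.tail := by
      rw [← Walk.support_append, Walk.take_spec]
    have hnd : p.support.Nodup := hp.2
    rw [hsp, List.nodup_append] at hnd
    have hzt : r.getVert 1 ∈ r.support.tail := by
      rcases List.mem_cons.1 (by rwa [← Walk.support_eq_cons] : r.getVert 1 ∈ x :: r.support.tail) with h | h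
      · exact absurd h hzx
      · exact h
    exact hnd.2.2 _ hy _ hzt hyz
  · -- first mem
    have := first_edge_mem q.reverse hqnn
    rw [Walk.edges_reverse, List.mem_reverse] at this
    exact Walk.edges_takeUntil_subset p hx this
  · exact Walk.edges_dropUntil_subset p hx (first_edge_mem r hrnn)
  · intro e he hxe
    have hsplit : e ∈ q.edges ∨ e ∈ r.edges := by
      rw [← List.mem_append, ← Walk.edges_append, Walk.take_spec]
      exact he
    rcases hsplit with h | h
    · left
      exact first_edge_eq q.reverse hqp.reverse (by rwa [Walk.edges_reverse, List.mem_reverse]) hxe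
    · right
      exact first_edge_eq r hrp h hxe

lemma cycle_two_distinct_edges [DecidableEq V] {a x : V} (c : G.Walk a a) (hc : c.IsCycle)
    (hx : x ∈ c.support) :
    ∃ f g : Sym2 V, f ≠ g ∧ x ∈ f ∧ x ∈ g ∧ f ∈ c.edges ∧ g ∈ c.edges := by
  by_cases hxa : x = a
  · subst hxa
    have hnn : ¬c.Nil := by
      rw [Walk.nil_iff_length_eq]
      have := hc.three_le_length
      omega
    obtain ⟨u, hadj, w, rfl⟩ := Walk.not_nil_iff.1 hnn
    rw [Walk.cons_isCycle_iff] at hc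
    have hwnn : ¬w.reverse.Nil := by
      apply Walk.not_nil_of_ne
      exact fun h => G.ne_of_adj hadj h
    have hg : s(x, w.reverse.getVert 1) ∈ w.edges := by
      have := first_edge_mem w.reverse hwnn
      rwa [Walk.edges_reverse, List.mem_reverse] at this
    refine ⟨s(x, u), s(x, w.reverse.getVert 1), ?_, by simp, by simp, by simp, ?_⟩
    · intro hfg
      exact hc.2 (by rwa [← hfg] at hg)
    · rw [Walk.edges_cons, List.mem_cons]
      exact Or.inr hg
  · set q := c.takeUntil x hx with hq
    set r := c.dropUntil x hx with hr
    have hqnn : ¬q.reverse.Nil := Walk.not_nil_of_ne hxa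
    have hrnn : ¬r.Nil := Walk.not_nil_of_ne hxa
    have hf : s(x, q.reverse.getVert 1) ∈ q.edges := by
      have := first_edge_mem q.reverse hqnn
      rwa [Walk.edges_reverse, List.mem_reverse] at this
    have hg : s(x, r.getVert 1) ∈ r.edges := first_edge_mem r hrnn
    have hnd : c.edges.Nodup := hc.isTrail.edges_nodup
    have hsplit : c.edges = q.edges ++ r.edges := by
      rw [← Walk.edges_append, Walk.take_spec]
    rw [hsplit, List.nodup_append] at hnd
    refine ⟨s(x, q.reverse.getVert 1), s(x, r.getVert 1), ?_, by simp, by simp,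
      Walk.edges_takeUntil_subset c hx hf, Walk.edges_dropUntil_subset c hx hg⟩
    intro hfg
    exact hnd.2.2 _ hf _ hg hfg

lemma cycle_edges_at [DecidableEq V] {a x : V} (c : G.Walk a a) (hc : c.IsCycle)
    (hx : x ∈ c.support) :
    ∃ f g : Sym2 V, ∀ e ∈ c.edges, x ∈ e → e = f ∨ e = g := by
  have hrot := hc.rotate hx
  have hmem : ∀ e, e ∈ c.edges ↔ e ∈ (c.rotate x hx).edges :=
    fun e => ((c.rotate_edges x hx).mem_iff).symm
  have hnn : ¬(c.rotate x hx).Nil := by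
    rw [Walk.nil_iff_length_eq]
    have := hrot.three_le_length
    omega
  obtain ⟨u, hadj, w, heq⟩ := Walk.not_nil_iff.1 hnn
  rw [heq] at hrot
  rw [Walk.cons_isCycle_iff] at hrot
  refine ⟨s(x, u), s(x, w.reverse.getVert 1), ?_⟩
  intro e he hxe
  rw [hmem, heq, Walk.edges_cons, List.mem_cons] at he
  rcases he with rfl | he'
  · left; rfl
  · right
    have hwrev : w.reverse.IsPath := hrot.1.reverse
    have : e ∈ w.reverse.edges := by rwa [Walk.edges_reverse, List.mem_reverse]
    exact first_edge_eq w.reverse hwrev this hxe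

/-- Transfer a walk into an induced subgraph. -/
def induceUp {X : Set V} : ∀ {u v : V} (p : G.Walk u v) (hs : ∀ x ∈ p.support, x ∈ X),
    (G.induce X).Walk ⟨u, hs u p.start_mem_support⟩ ⟨v, hs v p.end_mem_support⟩
  | _, _, Walk.nil, _ => Walk.nil
  | _, _, Walk.cons h q, hs =>
      Walk.cons (by simpa using h)
        (induceUp q (fun x hx => hs x (by simp [Walk.support_cons, hx])))

lemma induceUp_support {X : Set V} {u v : V} (p : G.Walk u v)
    (hs : ∀ x ∈ p.support, x ∈ X) :
    (induceUp p hs).support.map Subtype.val = p.support := by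
  induction p with
  | nil => simp [induceUp]
  | cons h q ih => simp [induceUp, ih]

lemma induceUp_edges {X : Set V} {u v : V} (p : G.Walk u v)
    (hs : ∀ x ∈ p.support, x ∈ X) :
    (induceUp p hs).edges.map (Sym2.map Subtype.val) = p.edges := by
  induction p with
  | nil => simp [induceUp]
  | cons h q ih => simp [induceUp, ih]

lemma induceUp_isCycle {X : Set V} {u : V} (p : G.Walk u u)
    (hs : ∀ x ∈ p.support, x ∈ X) (hc : p.IsCycle) : (induceUp p hs).IsCycle := by
  have hval : Function.Injective (Subtype.val : X → V) := Subtype.val_injective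
  constructor
  · constructor
    · constructor
      have := hc.isTrail.edges_nodup
      rw [← induceUp_edges p hs] at this
      exact this.of_map _
    · intro h
      have := congrArg (fun (q : List (Sym2 V)) => q.length) (induceUp_edges p hs)
      simp only [List.length_map] at this
      rw [h] at this
      simp only [Walk.edges_nil, List.length_nil] at this
      have h3 := hc.three_le_length
      rw [← Walk.length_edges] at h3
      omega
  · have := hc.2
    have hmap : (induceUp p hs).support.tail.map Subtype.val = p.support.tail := by
      rw [← induceUp_support p hs, List.map_tail]
    rw [← hmap] at this
    exact this.of_map _

lemma reachable_induce_of_walk {X : Set V} {u v : V} (p : G.Walk u v)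
    (hs : ∀ x ∈ p.support, x ∈ X) (hu : u ∈ X) (hv : v ∈ X) :
    (G.induce X).Reachable ⟨u, hu⟩ ⟨v, hv⟩ := ⟨(induceUp p hs).copy (by simp) (by simp)⟩

lemma isPath_append {a b c : V} {p : G.Walk a b} {q : G.Walk b c}
    (hp : p.IsPath) (hq : q.IsPath)
    (hdisj : ∀ x, x ∈ p.support → x ∈ q.support → x = b) : (p.append q).IsPath := by
  rw [Walk.isPath_def, Walk.support_append, List.nodup_append]
  refine ⟨hp.2, ?_, ?_⟩
  · have := hq.2
    rw [Walk.support_eq_cons, List.nodup_cons] at this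
    exact this.2
  · intro x hxp y hxq hxy
    subst hxy
    have hxb : x = b := hdisj x hxp (List.mem_of_mem_tail hxq)
    subst hxb
    have := hq.2
    rw [Walk.support_eq_cons, List.nodup_cons] at this
    exact this.1 hxq

/-- Forward closure along a path. -/
lemma chain_closure {X : Set V} {b : V} :
    ∀ {a : V} (p : G.Walk a b), p.IsPath →
      (∀ x y, x ∈ X → x ∈ p.support → x ≠ b → s(x, y) ∈ p.edges → y ∈ X) →
      a ∈ X → ∀ z ∈ p.support, z ∈ X := by
  intro a p
  induction p with
  | nil =>
      intro _ _ ha z hz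
      rw [Walk.support_nil, List.mem_singleton] at hz
      exact hz ▸ ha
  | @cons a c b h q ih =>
      intro hp hP ha z hz
      have hab : a ≠ b := by
        intro h'
        subst h'
        rw [Walk.cons_isPath_iff] at hp
        exact hp.2 q.end_mem_support
      have hc : c ∈ X :=
        hP a c ha (Walk.start_mem_support _) hab (by simp)
      rw [Walk.support_cons, List.mem_cons] at hz
      rcases hz with rfl | hz
      · exact ha
      · exact ih hp.of_cons
          (fun x y hx hxs hxb he =>
            hP x y hx (by rw [Walk.support_cons]; exact List.mem_cons_of_mem _ hxs) hxb
              (by rw [Walk.edges_cons]; exact List.mem_cons_of_mem _ he))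
          hc z hz

/-- In a 2-connected graph (as induced on X), every vertex has two distinct
neighbours within X. -/
lemma mindeg_two {X : Set V} (h2 : TwoConnected (G.induce X)) {x : V} (hx : x ∈ X) :
    ∃ y z, y ≠ z ∧ y ∈ X ∧ z ∈ X ∧ G.Adj x y ∧ G.Adj x z := by
  classical
  obtain ⟨hcard, hconn, hdel⟩ := h2
  by_contra hno
  push_neg at hno
  -- all neighbours of x in X are equal
  have huniq : ∀ y z, y ∈ X → G.Adj x y → z ∈ X → G.Adj x z → y = z := by
    intro y z hy hxy hz hxz
    by_contra hne
    exact (hno y z hne hy hz hxy) hxz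
  have hcard' : 3 ≤ X.ncard := by rwa [← Nat.card_coe_set_eq]
  by_cases hnb : ∃ y ∈ X, G.Adj x y
  · obtain ⟨y, hy, hxy⟩ := hnb
    -- delete y; x still connected to some third vertex
    have hzex : ∃ z ∈ X, z ≠ x ∧ z ≠ y := by
      by_contra hz
      push_neg at hz
      have hsub : X ⊆ {x, y} := by
        intro w hw
        by_cases hwx : w = x
        · exact hwx ▸ Set.mem_insert _ _
        · rcases em (w = y) with h | h
          · exact h ▸ Set.mem_insert_of_mem _ rfl
          · exact absurd h (not_not.2 (hz w hw hwx))
      have := Set.ncard_le_ncard hsub ((Set.finite_singleton y).insert x)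
      have h2 : ({x, y} : Set V).ncard ≤ 2 := Set.ncard_insert_le _ _ |>.trans (by simp [Set.ncard_singleton])
      omega
    obtain ⟨z, hz, hzx, hzy⟩ := hzex
    have hxne : x ≠ y := G.ne_of_adj hxy
    have hconn' := hdel ⟨y, hy⟩
    have hreach := hconn'.preconnected ⟨⟨x, hx⟩, by simp [Subtype.ext_iff, hxne]⟩
      ⟨⟨z, hz⟩, by simp [Subtype.ext_iff, hzy]⟩
    obtain ⟨w⟩ := hreach
    have hwnn : ¬w.Nil := Walk.not_nil_of_ne (by simp [Subtype.ext_iff, hzx.symm])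
    obtain ⟨u, hadj, q, _⟩ := Walk.not_nil_iff.1 hwnn
    -- hadj is an adjacency in the doubly-induced graph
    have : G.Adj x u.val.val := by simpa using hadj
    have hu : (u.val : V) ∈ X := u.val.2
    have huy : (u.val : V) ≠ y := by
      intro h
      exact u.2 (by simp [Subtype.ext_iff, h])
    exact huy (huniq u.val y hu this hy hxy)
  · push_neg at hnb
    have hzex : ∃ z ∈ X, z ≠ x := by
      by_contra hz
      push_neg at hz
      have hsub : X ⊆ {x} := fun w hw => hz w hw
      have := Set.ncard_le_ncard hsub (Set.finite_singleton x)
      simp [Set.ncard_singleton] at this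
      omega
    obtain ⟨z, hz, hzx⟩ := hzex
    have hreach := hconn.preconnected ⟨x, hx⟩ ⟨z, hz⟩
    obtain ⟨w⟩ := hreach
    have hwnn : ¬w.Nil := Walk.not_nil_of_ne (by simp [Subtype.ext_iff, hzx.symm])
    obtain ⟨u, hadj, q, _⟩ := Walk.not_nil_iff.1 hwnn
    have : G.Adj x u.val := by simpa using hadj
    exact hnb u.val u.2 this

lemma ham_of_walk {X : Set V} {a : V} (c : G.Walk a a) (hc : c.IsCycle)
    (hS : ∀ x ∈ c.support, x ∈ X) (hcov : ∀ x ∈ X, x ∈ c.support) :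
    IsHamiltonianGraph (G.induce X) := by
  refine ⟨⟨a, hS a c.start_mem_support⟩,
    (induceUp c hS).copy rfl (Subtype.ext rfl), ?_, ?_⟩
  · rw [Walk.isCycle_copy]
    exact induceUp_isCycle c hS hc
  · intro x
    rw [Walk.support_copy]
    have hx : (x : V) ∈ c.support := hcov x x.2
    rw [← induceUp_support c hS] at hx
    obtain ⟨y, hy, hyx⟩ := List.mem_map.1 hx
    rwa [Subtype.val_injective hyx] at hy

lemma tri_finish {X : Set V} {k1 k2 k3 : V} (h12 : G.Adj k1 k2) (h23 : G.Adj k2 k3)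
    (h13 : G.Adj k1 k3) (hX : ∀ x, x ∈ X ↔ x = k1 ∨ x = k2 ∨ x = k3) :
    IsHamiltonianGraph (G.induce X) := by
  have hn12 := h12.ne
  have hn23 := h23.ne
  have hn13 := h13.ne
  set c : G.Walk k1 k1 := Walk.cons h12 (Walk.cons h23 (Walk.cons h13.symm Walk.nil)) with hcdef
  have hc : c.IsCycle := by
    rw [hcdef, Walk.cons_isCycle_iff]
    constructor
    · rw [Walk.cons_isPath_iff]
      refine ⟨?_, ?_⟩
      · rw [Walk.cons_isPath_iff]
        refine ⟨Walk.IsPath.nil, ?_⟩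
        simp only [Walk.support_nil, List.mem_singleton]
        exact fun h => hn13 h.symm
      · simp only [Walk.support_cons, Walk.support_nil, List.mem_cons, List.mem_singleton,
          List.not_mem_nil, or_false]
        rintro (h | h)
        · exact hn23 h
        · exact hn12 h.symm
    · intro hmem
      simp only [Walk.edges_cons, Walk.edges_nil, List.mem_cons, List.not_mem_nil, or_false] at hmem
      rcases hmem with h | h <;> rw [Sym2.eq_iff] at h <;>
        rcases h with ⟨h1, h2⟩ | ⟨h1, h2⟩
      · exact hn12 h1
      · exact hn13 h1
      · exact hn13 h1
      · exact hn23 h2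
  have hsup : ∀ x ∈ c.support, x ∈ X := by
    intro x hxs
    rw [hcdef] at hxs
    simp only [Walk.support_cons, Walk.support_nil, List.mem_cons, List.mem_singleton] at hxs
    rw [hX]
    tauto
  refine ham_of_walk c hc hsup ?_
  intro x hxX
  rw [hX] at hxX
  rw [hcdef]
  simp only [Walk.support_cons, Walk.support_nil, List.mem_cons, List.mem_singleton]
  tauto

lemma finish {X : Set V} {ka kb kc l : V} (Pa : G.Walk ka l) (Pb : G.Walk kb l)
    (hPa : Pa.IsPath) (hPb : Pb.IsPath) (hla : 1 ≤ Pa.length) (hlb : 1 ≤ Pb.length)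
    (adjab : G.Adj ka kb) (adjac : G.Adj ka kc) (adjbc : G.Adj kb kc)
    (disjab : ∀ x, x ∈ Pa.support → x ∈ Pb.support → x = l)
    (hkcPa : kc ∉ Pa.support) (hkcPb : kc ∉ Pb.support)
    (hfa : ∀ x ∈ Pa.support, x ∈ X) (hfb : ∀ x ∈ Pb.support, x ∈ X)
    (hXsub : ∀ x ∈ X, x ∈ Pa.support ∨ x ∈ Pb.support ∨ x = kc) :
    IsHamiltonianGraph (G.induce X) := by
  have hkal : ka ≠ l := path_ends_ne Pa hPa hla
  have hkbl : kb ≠ l := path_ends_ne Pb hPb hlb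
  have hkaPb : ka ∉ Pb.support := fun h => hkal (disjab ka Pa.start_mem_support h)
  have hkbPa : kb ∉ Pa.support := fun h => hkbl (disjab kb h Pb.start_mem_support)
  set R : G.Walk kb ka := Pb.append Pa.reverse with hRdef
  have hRpath : R.IsPath := by
    apply isPath_append hPb hPa.reverse
    intro x hx1 hx2
    rw [Walk.support_reverse, List.mem_reverse] at hx2
    exact disjab x hx2 hx1
  have hRsupp : ∀ x, x ∈ R.support ↔ (x ∈ Pb.support ∨ x ∈ Pa.support) := by
    intro x
    rw [hRdef, Walk.mem_support_append_iff, Walk.support_reverse, List.mem_reverse]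
  have hRsuppX : ∀ x ∈ R.support, x ∈ X := by
    intro x hx
    rcases (hRsupp x).1 hx with h | h
    · exact hfb x h
    · exact hfa x h
  have hkcR : kc ∉ R.support := by
    rw [hRsupp]
    rintro (h | h)
    · exact hkcPb h
    · exact hkcPa h
  by_cases hkc : kc ∈ X
  · -- cycle ka - kc - kb - (R) - ka
    set c : G.Walk ka ka := Walk.cons adjac (Walk.cons adjbc.symm R) with hcdef
    have hc : c.IsCycle := by
      rw [hcdef, Walk.cons_isCycle_iff]
      constructor
      · rw [Walk.cons_isPath_iff]
        exact ⟨hRpath, hkcR⟩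
      · intro hmem
        rw [Walk.edges_cons, List.mem_cons] at hmem
        rcases hmem with h | h
        · rw [Sym2.eq_iff] at h
          rcases h with ⟨h1, h2⟩ | ⟨h1, h2⟩
          · exact adjbc.ne h2.symm
          · exact adjab.ne h1
        · exact hkcR (Walk.snd_mem_support_of_mem_edges R h)
    apply ham_of_walk c hc
    · intro x hx
      rw [hcdef] at hx
      simp only [Walk.support_cons, List.mem_cons] at hx
      rcases hx with rfl | rfl | hx
      · exact hfa x Pa.start_mem_support
      · exact hkc
      · exact hRsuppX x hx
    · intro x hx
      rw [hcdef]
      simp only [Walk.support_cons, List.mem_cons]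
      rcases hXsub x hx with h | h | rfl
      · exact Or.inr (Or.inr ((hRsupp x).2 (Or.inr h)))
      · exact Or.inr (Or.inr ((hRsupp x).2 (Or.inl h)))
      · exact Or.inr (Or.inl rfl)
  · -- cycle ka - kb - (R) - ka
    set c : G.Walk ka ka := Walk.cons adjab R with hcdef
    have hc : c.IsCycle := by
      rw [hcdef, Walk.cons_isCycle_iff]
      refine ⟨hRpath, ?_⟩
      intro hmem
      rw [hRdef, Walk.edges_append, List.mem_append] at hmem
      rcases hmem with h | h
      · exact hkaPb (Walk.fst_mem_support_of_mem_edges Pb h)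
      · rw [Walk.edges_reverse, List.mem_reverse] at h
        exact hkbPa (Walk.snd_mem_support_of_mem_edges Pa h)
    apply ham_of_walk c hc
    · intro x hx
      rw [hcdef] at hx
      simp only [Walk.support_cons, List.mem_cons] at hx
      rcases hx with rfl | hx
      · exact hfa x Pa.start_mem_support
      · exact hRsuppX x hx
    · intro x hx
      rw [hcdef]
      simp only [Walk.support_cons, List.mem_cons]
      rcases hXsub x hx with h | h | rfl
      · exact Or.inr ((hRsupp x).2 (Or.inr h))
      · exact Or.inr ((hRsupp x).2 (Or.inl h))
      · exact absurd hx hkc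


lemma mem_support_of_edge_mem {u v x : V} {G : SimpleGraph V} (p : G.Walk u v) {e : Sym2 V}
    (he : e ∈ p.edges) (hx : x ∈ e) : x ∈ p.support := by
  induction e using Sym2.inductionOn with
  | hf y z =>
    rcases Sym2.mem_iff.1 hx with rfl | rfl
    · exact Walk.fst_mem_support_of_mem_edges p he
    · exact Walk.snd_mem_support_of_mem_edges p he

lemma no_end_adj {a b : V} {G : SimpleGraph V} (P : G.Walk a b) (hP : P.IsPath)
    (h2 : 2 ≤ P.length) : s(a, b) ∉ P.edges := by
  intro h
  have h1 := PyrAux.first_edge_eq P hP h (by simp)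
  rw [Sym2.eq_iff] at h1
  rcases h1 with ⟨-, hb⟩ | ⟨-, hb⟩
  · exact getVert_one_ne_end P hP h2 hb.symm
  · exact path_ends_ne P hP (by omega) hb.symm

lemma path_avoid {G : SimpleGraph V} [DecidableEq V] {a b x v : V} (P : G.Walk a b)
    (hP : P.IsPath) (hx : x ∈ P.support) (hxv : x ≠ v) :
    (∃ q : G.Walk x b, (∀ y ∈ q.support, y ∈ P.support) ∧ v ∉ q.support) ∨
    (∃ q : G.Walk x a, (∀ y ∈ q.support, y ∈ P.support) ∧ v ∉ q.support) := by
  by_cases hv : v ∈ P.support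
  · by_cases hq : x ∈ (P.takeUntil v hv).support
    · right
      refine ⟨((P.takeUntil v hv).takeUntil x hq).reverse, ?_, ?_⟩
      · intro y hy
        rw [Walk.support_reverse, List.mem_reverse] at hy
        exact Walk.support_takeUntil_subset P hv (Walk.support_takeUntil_subset _ hq hy)
      · rw [Walk.support_reverse, List.mem_reverse]
        exact take_avoid (P.takeUntil v hv) (hP.takeUntil hv) hq hxv
    · left
      have hx' : x ∈ (P.dropUntil v hv).support := by
        have hiff : x ∈ (P.takeUntil v hv).support ∨ x ∈ (P.dropUntil v hv).support := by
          rw [← Walk.mem_support_append_iff, Walk.take_spec]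
          exact hx
        rcases hiff with h | h
        · exact absurd h hq
        · exact h
      refine ⟨(P.dropUntil v hv).dropUntil x hx', ?_, ?_⟩
      · intro y hy
        exact Walk.support_dropUntil_subset P hv (Walk.support_dropUntil_subset _ hx' hy)
      · exact drop_avoid (P.dropUntil v hv) (hP.dropUntil hv) hx' hxv
  · left
    refine ⟨P.dropUntil x hx, fun y hy => Walk.support_dropUntil_subset P hx hy, ?_⟩
    exact fun h => hv (Walk.support_dropUntil_subset P hx h)

end PyrAux

/-- Every pyramid is an HC-obstruction. -/

theorem pyramid_isHCObstruction {V : Type u} [Fintype V] (G : SimpleGraph V)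
    (hG : IsPyramid G) : IsHCObstruction G := by
  classical
  obtain ⟨k1, k2, k3, l, P1, P2, P3, h12, h23, h13, hp1, hp2, hp3, hl1, hl2, hl3,
    d12, d13, d23, hcov, hedge⟩ := hG
  have hk1l : k1 ≠ l := PyrAux.path_ends_ne P1 hp1 (by omega)
  have hk2l : k2 ≠ l := PyrAux.path_ends_ne P2 hp2 (by omega)
  have hk3l : k3 ≠ l := PyrAux.path_ends_ne P3 hp3 (by omega)
  have hk1P2 : k1 ∉ P2.support := fun h => hk1l (d12 k1 P1.start_mem_support h)
  have hk1P3 : k1 ∉ P3.support := fun h => hk1l (d13 k1 P1.start_mem_support h)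
  have hk2P1 : k2 ∉ P1.support := fun h => hk2l (d12 k2 h P2.start_mem_support)
  have hk2P3 : k2 ∉ P3.support := fun h => hk2l (d23 k2 P2.start_mem_support h)
  have hk3P1 : k3 ∉ P1.support := fun h => hk3l (d13 k3 h P3.start_mem_support)
  have hk3P2 : k3 ∉ P2.support := fun h => hk3l (d23 k3 h P3.start_mem_support)
  have hlP1 : l ∈ P1.support := P1.end_mem_support
  have hlP2 : l ∈ P2.support := P2.end_mem_support
  have hlP3 : l ∈ P3.support := P3.end_mem_support
  have eclass : ∀ e ∈ G.edgeSet,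
      e = s(k1, k2) ∨ e = s(k2, k3) ∨ e = s(k1, k3) ∨
        e ∈ P1.edges ∨ e ∈ P2.edges ∨ e ∈ P3.edges := hedge
  have hlk1 : l ≠ k1 := fun h => hk1l h.symm
  have hlk2 : l ≠ k2 := fun h => hk2l h.symm
  have hlk3 : l ≠ k3 := fun h => hk3l h.symm
  have noadj1 : ¬ G.Adj k1 l := by
    intro h
    rcases eclass s(k1, l) (G.mem_edgeSet.2 h) with h' | h' | h' | h' | h' | h'
    · rw [Sym2.eq_iff] at h'
      rcases h' with ⟨-, hb⟩ | ⟨-, hb⟩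
      · exact hlk2 hb
      · exact hlk1 hb
    · rw [Sym2.eq_iff] at h'
      rcases h' with ⟨ha, -⟩ | ⟨ha, -⟩
      · exact hk2P1 (ha ▸ P1.start_mem_support)
      · exact hk3P1 (ha ▸ P1.start_mem_support)
    · rw [Sym2.eq_iff] at h'
      rcases h' with ⟨-, hb⟩ | ⟨-, hb⟩
      · exact hlk3 hb
      · exact hlk1 hb
    · exact PyrAux.no_end_adj P1 hp1 hl1 h'
    · exact hk1P2 (Walk.fst_mem_support_of_mem_edges P2 h')
    · exact hk1P3 (Walk.fst_mem_support_of_mem_edges P3 h')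
  have noadj2 : ¬ G.Adj k2 l := by
    intro h
    rcases eclass s(k2, l) (G.mem_edgeSet.2 h) with h' | h' | h' | h' | h' | h'
    · rw [Sym2.eq_iff] at h'
      rcases h' with ⟨ha, hb⟩ | ⟨ha, hb⟩
      · exact hk1P2 (ha ▸ P2.start_mem_support)
      · exact hlk1 hb
    · rw [Sym2.eq_iff] at h'
      rcases h' with ⟨-, hb⟩ | ⟨ha, -⟩
      · exact hlk3 hb
      · exact hk3P2 (ha ▸ P2.start_mem_support)
    · rw [Sym2.eq_iff] at h'
      rcases h' with ⟨ha, -⟩ | ⟨ha, hb⟩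
      · exact hk1P2 (ha ▸ P2.start_mem_support)
      · exact hk3P2 (ha ▸ P2.start_mem_support)
    · exact hk2P1 (Walk.fst_mem_support_of_mem_edges P1 h')
    · exact PyrAux.no_end_adj P2 hp2 hl2 h'
    · exact hk2P3 (Walk.fst_mem_support_of_mem_edges P3 h')
  have noadj3 : ¬ G.Adj k3 l := by
    intro h
    rcases eclass s(k3, l) (G.mem_edgeSet.2 h) with h' | h' | h' | h' | h' | h'
    · rw [Sym2.eq_iff] at h'
      rcases h' with ⟨ha, -⟩ | ⟨ha, -⟩
      · exact hk1P3 (ha ▸ P3.start_mem_support)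
      · exact hk2P3 (ha ▸ P3.start_mem_support)
    · rw [Sym2.eq_iff] at h'
      rcases h' with ⟨ha, -⟩ | ⟨-, hb⟩
      · exact hk2P3 (ha ▸ P3.start_mem_support)
      · exact hlk2 hb
    · rw [Sym2.eq_iff] at h'
      rcases h' with ⟨ha, -⟩ | ⟨-, hb⟩
      · exact hk1P3 (ha ▸ P3.start_mem_support)
      · exact hlk1 hb
    · exact hk3P1 (Walk.fst_mem_support_of_mem_edges P1 h')
    · exact hk3P2 (Walk.fst_mem_support_of_mem_edges P2 h')
    · exact PyrAux.no_end_adj P3 hp3 hl3 h'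
  have edgeat1 : ∀ x, x ∈ P1.support → x ≠ k1 → x ≠ l →
      ∀ e ∈ G.edgeSet, x ∈ e → e ∈ P1.edges := by
    intro x hx hxk hxl e he hxe
    rcases eclass e he with rfl | rfl | rfl | h' | h' | h'
    · rcases Sym2.mem_iff.1 hxe with rfl | rfl
      · exact absurd rfl hxk
      · exact absurd hx hk2P1
    · rcases Sym2.mem_iff.1 hxe with rfl | rfl
      · exact absurd hx hk2P1
      · exact absurd hx hk3P1
    · rcases Sym2.mem_iff.1 hxe with rfl | rfl
      · exact absurd rfl hxk
      · exact absurd hx hk3P1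
    · exact h'
    · exact absurd (d12 x hx (PyrAux.mem_support_of_edge_mem P2 h' hxe)) hxl
    · exact absurd (d13 x hx (PyrAux.mem_support_of_edge_mem P3 h' hxe)) hxl
  have edgeat2 : ∀ x, x ∈ P2.support → x ≠ k2 → x ≠ l →
      ∀ e ∈ G.edgeSet, x ∈ e → e ∈ P2.edges := by
    intro x hx hxk hxl e he hxe
    rcases eclass e he with rfl | rfl | rfl | h' | h' | h'
    · rcases Sym2.mem_iff.1 hxe with rfl | rfl
      · exact absurd hx hk1P2
      · exact absurd rfl hxk
    · rcases Sym2.mem_iff.1 hxe with rfl | rfl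
      · exact absurd rfl hxk
      · exact absurd hx hk3P2
    · rcases Sym2.mem_iff.1 hxe with rfl | rfl
      · exact absurd hx hk1P2
      · exact absurd hx hk3P2
    · exact absurd (d12 x (PyrAux.mem_support_of_edge_mem P1 h' hxe) hx) hxl
    · exact h'
    · exact absurd (d23 x hx (PyrAux.mem_support_of_edge_mem P3 h' hxe)) hxl
  have edgeat3 : ∀ x, x ∈ P3.support → x ≠ k3 → x ≠ l →
      ∀ e ∈ G.edgeSet, x ∈ e → e ∈ P3.edges := by
    intro x hx hxk hxl e he hxe
    rcases eclass e he with rfl | rfl | rfl | h' | h' | h'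
    · rcases Sym2.mem_iff.1 hxe with rfl | rfl
      · exact absurd hx hk1P3
      · exact absurd hx hk2P3
    · rcases Sym2.mem_iff.1 hxe with rfl | rfl
      · exact absurd hx hk2P3
      · exact absurd rfl hxk
    · rcases Sym2.mem_iff.1 hxe with rfl | rfl
      · exact absurd hx hk1P3
      · exact absurd rfl hxk
    · exact absurd (d13 x (PyrAux.mem_support_of_edge_mem P1 h' hxe) hx) hxl
    · exact absurd (d23 x (PyrAux.mem_support_of_edge_mem P2 h' hxe) hx) hxl
    · exact h'
  refine ⟨⟨?_, ?_, ?_⟩, ?_, ?_⟩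
  · rw [Nat.card_eq_fintype_card]
    have := Fintype.two_lt_card_iff.2 ⟨k1, k2, k3, h12.ne, h13.ne, h23.ne⟩
    omega
  · rw [connected_iff]
    refine ⟨?_, ⟨l⟩⟩
    have key : ∀ w, G.Reachable w l := by
      intro w
      rcases hcov w with h | h | h
      · exact ⟨P1.dropUntil w h⟩
      · exact ⟨P2.dropUntil w h⟩
      · exact ⟨P3.dropUntil w h⟩
    exact fun u v => (key u).trans (key v).symm
  · intro v
    rw [connected_iff]
    by_cases hvl : v = l
    · subst hvl
      have hk1S : k1 ∈ ({v}ᶜ : Set V) := by simpa using hk1l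
      refine ⟨?_, ⟨⟨k1, hk1S⟩⟩⟩
      have hub : ∀ (x : V) (hx : x ∈ ({v}ᶜ : Set V)),
          (G.induce ({v}ᶜ : Set V)).Reachable ⟨x, hx⟩ ⟨k1, hk1S⟩ := by
        intro x hx
        have hxv : x ≠ v := by simpa using hx
        have toK : ∀ (ki : V) (Pi : G.Walk ki v), Pi.IsPath → ∀ hmem : x ∈ Pi.support,
            ∀ hki : ki ∈ ({v}ᶜ : Set V),
            (G.induce ({v}ᶜ : Set V)).Reachable ⟨x, hx⟩ ⟨ki, hki⟩ := by
          intro ki Pi hpi hmem hki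
          have havoid := PyrAux.take_avoid Pi hpi hmem hxv
          refine PyrAux.reachable_induce_of_walk ((Pi.takeUntil x hmem).reverse) ?_ hx hki
          intro y hy
          rw [Walk.support_reverse, List.mem_reverse] at hy
          simp only [Set.mem_compl_iff, Set.mem_singleton_iff]
          exact fun h => havoid (h ▸ hy)
        have hk2S : k2 ∈ ({v}ᶜ : Set V) := by simpa using hk2l
        have hk3S : k3 ∈ ({v}ᶜ : Set V) := by simpa using hk3l
        have edge21 : (G.induce ({v}ᶜ : Set V)).Reachable ⟨k2, hk2S⟩ ⟨k1, hk1S⟩ := by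
          refine PyrAux.reachable_induce_of_walk (Walk.cons h12.symm Walk.nil) ?_ hk2S hk1S
          intro y hy
          simp only [Walk.support_cons, Walk.support_nil, List.mem_cons, List.mem_singleton,
            List.not_mem_nil, or_false] at hy
          rcases hy with rfl | rfl
          · exact hk2S
          · exact hk1S
        have edge31 : (G.induce ({v}ᶜ : Set V)).Reachable ⟨k3, hk3S⟩ ⟨k1, hk1S⟩ := by
          refine PyrAux.reachable_induce_of_walk (Walk.cons h13.symm Walk.nil) ?_ hk3S hk1S
          intro y hy
          simp only [Walk.support_cons, Walk.support_nil, List.mem_cons, List.mem_singleton,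
            List.not_mem_nil, or_false] at hy
          rcases hy with rfl | rfl
          · exact hk3S
          · exact hk1S
        rcases hcov x with h | h | h
        · exact toK k1 P1 hp1 h hk1S
        · exact (toK k2 P2 hp2 h hk2S).trans edge21
        · exact (toK k3 P3 hp3 h hk3S).trans edge31
      exact fun a b => (hub a.1 a.2).trans (hub b.1 b.2).symm
    · have hlS : l ∈ ({v}ᶜ : Set V) := by
        simp only [Set.mem_compl_iff, Set.mem_singleton_iff]
        exact fun h => hvl h.symm
      refine ⟨?_, ⟨⟨l, hlS⟩⟩⟩
      have bridge : ∀ (a c : V) (Pc : G.Walk c l), ∀ ha : a ∈ ({v}ᶜ : Set V),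
          G.Adj a c → v ∉ Pc.support →
          (G.induce ({v}ᶜ : Set V)).Reachable ⟨a, ha⟩ ⟨l, hlS⟩ := by
        intro a c Pc ha hadj hvc
        refine PyrAux.reachable_induce_of_walk (Walk.cons hadj Pc) ?_ ha hlS
        intro y hy
        rw [Walk.support_cons, List.mem_cons] at hy
        simp only [Set.mem_compl_iff, Set.mem_singleton_iff]
        rcases hy with rfl | hy
        · simpa using ha
        · exact fun h => hvc (h ▸ hy)
      have hub : ∀ (x : V) (hx : x ∈ ({v}ᶜ : Set V)),
          (G.induce ({v}ᶜ : Set V)).Reachable ⟨x, hx⟩ ⟨l, hlS⟩ := by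
        intro x hx
        have hxv : x ≠ v := by simpa using hx
        have handle : ∀ (ki kj kk : V) (Pi : G.Walk ki l) (Pj : G.Walk kj l)
            (Pk : G.Walk kk l), Pi.IsPath → G.Adj ki kj → G.Adj ki kk →
            (∀ y, y ∈ Pj.support → y ∈ Pk.support → y = l) →
            x ∈ Pi.support →
            (G.induce ({v}ᶜ : Set V)).Reachable ⟨x, hx⟩ ⟨l, hlS⟩ := by
          intro ki kj kk Pi Pj Pk hpi hij hik hjk hmem
          rcases PyrAux.path_avoid Pi hpi hmem hxv with ⟨q, hqs, hqv⟩ | ⟨q, hqs, hqv⟩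
          · refine PyrAux.reachable_induce_of_walk q ?_ hx hlS
            intro y hy
            simp only [Set.mem_compl_iff, Set.mem_singleton_iff]
            exact fun h => hqv (h ▸ hy)
          · have hkiS : ki ∈ ({v}ᶜ : Set V) := by
              simp only [Set.mem_compl_iff, Set.mem_singleton_iff]
              intro h
              exact hqv (h ▸ q.end_mem_support)
            have step1 : (G.induce ({v}ᶜ : Set V)).Reachable ⟨x, hx⟩ ⟨ki, hkiS⟩ := by
              refine PyrAux.reachable_induce_of_walk q ?_ hx hkiS
              intro y hy
              simp only [Set.mem_compl_iff, Set.mem_singleton_iff]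
              exact fun h => hqv (h ▸ hy)
            by_cases hvPj : v ∈ Pj.support
            · have hvPk : v ∉ Pk.support := fun h => hvl (hjk v hvPj h)
              exact step1.trans (bridge ki kk Pk hkiS hik hvPk)
            · exact step1.trans (bridge ki kj Pj hkiS hij hvPj)
        rcases hcov x with h | h | h
        · exact handle k1 k2 k3 P1 P2 P3 hp1 h12 h13 d23 h
        · exact handle k2 k1 k3 P2 P1 P3 hp2 h12.symm h23 d13 h
        · exact handle k3 k1 k2 P3 P1 P2 hp3 h13.symm h23.symm d12 h
      exact fun a b => (hub a.1 a.2).trans (hub b.1 b.2).symm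
  · -- not Hamiltonian
    rintro ⟨a, c, hc, hall⟩
    have mand : ∀ (ki : V) (Pi : G.Walk ki l), Pi.IsPath →
        (∀ x, x ∈ Pi.support → x ≠ ki → x ≠ l → ∀ e ∈ G.edgeSet, x ∈ e → e ∈ Pi.edges) →
        ∀ x, x ∈ Pi.support → x ≠ ki → x ≠ l →
        ∀ e ∈ Pi.edges, x ∈ e → e ∈ c.edges := by
      intro ki Pi hpi hea x hx hxk hxl e he hxe
      obtain ⟨f, g, hfg, hxf, hxg, hfc, hgc⟩ :=
        PyrAux.cycle_two_distinct_edges c hc (hall x)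
      obtain ⟨y, z, hyz, hy, hz, huniq⟩ := PyrAux.internal_nbrs Pi hpi hx hxk hxl
      have hfP : f ∈ Pi.edges := hea x hx hxk hxl f (Walk.edges_subset_edgeSet c hfc) hxf
      have hgP : g ∈ Pi.edges := hea x hx hxk hxl g (Walk.edges_subset_edgeSet c hgc) hxg
      have hf2 := huniq f hfP hxf
      have hg2 := huniq g hgP hxg
      have hboth : s(x, y) ∈ c.edges ∧ s(x, z) ∈ c.edges := by
        rcases hf2 with rfl | rfl <;> rcases hg2 with rfl | rfl
        · exact absurd rfl hfg
        · exact ⟨hfc, hgc⟩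
        · exact ⟨hgc, hfc⟩
        · exact absurd rfl hfg
      rcases huniq e he hxe with rfl | rfl
      · exact hboth.1
      · exact hboth.2
    have tedge : ∀ (ki : V) (Pi : G.Walk ki l), Pi.IsPath → 2 ≤ Pi.length → ¬ G.Adj ki l →
        (∀ x, x ∈ Pi.support → x ≠ ki → x ≠ l → ∀ e ∈ G.edgeSet, x ∈ e → e ∈ Pi.edges) →
        ∃ t, s(l, t) ∈ c.edges ∧ t ≠ l ∧ t ∈ Pi.support := by
      intro ki Pi hpi h2 hnadj hea
      have hnn : ¬Pi.reverse.Nil :=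
        Walk.not_nil_of_ne (fun h => (PyrAux.path_ends_ne Pi hpi (by omega)) h.symm)
      set t := Pi.reverse.getVert 1 with ht
      have hmemrev : s(l, t) ∈ Pi.reverse.edges := PyrAux.first_edge_mem Pi.reverse hnn
      have hmem : s(l, t) ∈ Pi.edges := by
        rwa [Walk.edges_reverse, List.mem_reverse] at hmemrev
      have hadj : G.Adj l t := Walk.edges_subset_edgeSet Pi.reverse hmemrev
      have htl : t ≠ l := hadj.ne'
      have htk : t ≠ ki := by
        intro h
        rw [h] at hadj
        exact hnadj hadj.symm
      have htP : t ∈ Pi.support := PyrAux.mem_support_of_edge_mem Pi hmem (by simp)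
      exact ⟨t, mand ki Pi hpi hea t htP htk htl s(l, t) hmem (by simp), htl, htP⟩
    obtain ⟨t1, ht1c, ht1l, ht1P⟩ := tedge k1 P1 hp1 hl1 noadj1 edgeat1
    obtain ⟨t2, ht2c, ht2l, ht2P⟩ := tedge k2 P2 hp2 hl2 noadj2 edgeat2
    obtain ⟨t3, ht3c, ht3l, ht3P⟩ := tedge k3 P3 hp3 hl3 noadj3 edgeat3
    have hinj : ∀ u w : V, u ≠ w → s(l, u) ≠ s(l, w) := by
      intro u w h hh
      rw [Sym2.eq_iff] at hh
      rcases hh with ⟨-, hb⟩ | ⟨ha, hb⟩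
      · exact h hb
      · exact h (hb.trans ha)
    have ht12 : t1 ≠ t2 := fun h => ht1l (d12 t1 ht1P (h ▸ ht2P))
    have ht13 : t1 ≠ t3 := fun h => ht1l (d13 t1 ht1P (h ▸ ht3P))
    have ht23 : t2 ≠ t3 := fun h => ht2l (d23 t2 ht2P (h ▸ ht3P))
    obtain ⟨f, g, huniq⟩ := PyrAux.cycle_edges_at c hc (hall l)
    have e1 := huniq s(l, t1) ht1c (by simp)
    have e2 := huniq s(l, t2) ht2c (by simp)
    have e3 := huniq s(l, t3) ht3c (by simp)
    rcases e1 with h1 | h1 <;> rcases e2 with h2 | h2 <;> rcases e3 with h3 | h3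
    · exact hinj t1 t2 ht12 (h1.trans h2.symm)
    · exact hinj t1 t2 ht12 (h1.trans h2.symm)
    · exact hinj t1 t3 ht13 (h1.trans h3.symm)
    · exact hinj t2 t3 ht23 (h2.trans h3.symm)
    · exact hinj t2 t3 ht23 (h2.trans h3.symm)
    · exact hinj t1 t3 ht13 (h1.trans h3.symm)
    · exact hinj t1 t2 ht12 (h1.trans h2.symm)
    · exact hinj t1 t2 ht12 (h1.trans h2.symm)
  · -- proper induced subgraphs
    intro X hXne
    by_cases h2 : TwoConnected (G.induce X)
    swap
    · exact Or.inl h2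
    right
    have sym2eq : ∀ x' z u' : V, z ≠ x' → s(x', z) = s(x', u') → z = u' := by
      intro x' z u' hzx h
      rw [Sym2.eq_iff] at h
      rcases h with ⟨-, hb⟩ | ⟨-, hb⟩
      · exact hb
      · exact absurd hb hzx
    have prop : ∀ (ki : V) (Pi : G.Walk ki l), Pi.IsPath →
        (∀ x, x ∈ Pi.support → x ≠ ki → x ≠ l → ∀ e ∈ G.edgeSet, x ∈ e → e ∈ Pi.edges) →
        ∀ x y, x ∈ X → x ∈ Pi.support → x ≠ ki → x ≠ l → s(x, y) ∈ Pi.edges → y ∈ X := by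
      intro ki Pi hpi hea x y hxX hx hxk hxl he
      obtain ⟨u, w, huw, hu, hw, huniq⟩ := PyrAux.internal_nbrs Pi hpi hx hxk hxl
      obtain ⟨y1, y2, hy12, hy1X, hy2X, hadj1, hadj2⟩ := PyrAux.mindeg_two h2 hxX
      have hy1P : s(x, y1) ∈ Pi.edges :=
        hea x hx hxk hxl _ (G.mem_edgeSet.2 hadj1) (by simp)
      have hy2P : s(x, y2) ∈ Pi.edges :=
        hea x hx hxk hxl _ (G.mem_edgeSet.2 hadj2) (by simp)
      have hy1uw : y1 = u ∨ y1 = w := by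
        rcases huniq _ hy1P (by simp) with h | h
        · exact Or.inl (sym2eq x y1 u hadj1.ne' h)
        · exact Or.inr (sym2eq x y1 w hadj1.ne' h)
      have hy2uw : y2 = u ∨ y2 = w := by
        rcases huniq _ hy2P (by simp) with h | h
        · exact Or.inl (sym2eq x y2 u hadj2.ne' h)
        · exact Or.inr (sym2eq x y2 w hadj2.ne' h)
      have huwX : u ∈ X ∧ w ∈ X := by
        rcases hy1uw with rfl | rfl <;> rcases hy2uw with rfl | rfl
        · exact absurd rfl hy12
        · exact ⟨hy1X, hy2X⟩
        · exact ⟨hy2X, hy1X⟩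
        · exact absurd rfl hy12
      have hyadj : G.Adj x y := G.mem_edgeSet.1 (Walk.edges_subset_edgeSet Pi he)
      rcases huniq _ he (by simp) with h | h
      · exact (sym2eq x y u hyadj.ne' h) ▸ huwX.1
      · exact (sym2eq x y w hyadj.ne' h) ▸ huwX.2
    have chainP : ∀ (ki : V) (Pi : G.Walk ki l), ∀ hpi : Pi.IsPath,
        (∀ x, x ∈ Pi.support → x ≠ ki → x ≠ l → ∀ e ∈ G.edgeSet, x ∈ e → e ∈ Pi.edges) →
        ∀ x, x ∈ X → ∀ hx : x ∈ Pi.support, x ≠ ki → x ≠ l →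
        ∀ z ∈ Pi.support, z ∈ X := by
      intro ki Pi hpi hea x hxX hx hxk hxl
      have hfwd : ∀ z ∈ (Pi.dropUntil x hx).support, z ∈ X := by
        apply PyrAux.chain_closure (Pi.dropUntil x hx) (hpi.dropUntil hx) ?_ hxX
        intro x' y hx'X hx's hx'l he
        refine prop ki Pi hpi hea x' y hx'X
          (Walk.support_dropUntil_subset Pi hx hx's) ?_ hx'l
          (Walk.edges_dropUntil_subset Pi hx he)
        exact fun h => (PyrAux.drop_avoid Pi hpi hx hxk) (h ▸ hx's)
      have hbwd : ∀ z ∈ (Pi.takeUntil x hx).reverse.support, z ∈ X := by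
        apply PyrAux.chain_closure ((Pi.takeUntil x hx).reverse)
          ((hpi.takeUntil hx).reverse) ?_ hxX
        intro x' y hx'X hx's hx'k he
        have hx's' : x' ∈ (Pi.takeUntil x hx).support := by
          rwa [Walk.support_reverse, List.mem_reverse] at hx's
        have he' : s(x', y) ∈ (Pi.takeUntil x hx).edges := by
          rwa [Walk.edges_reverse, List.mem_reverse] at he
        refine prop ki Pi hpi hea x' y hx'X
          (Walk.support_takeUntil_subset Pi hx hx's') hx'k ?_
          (Walk.edges_takeUntil_subset Pi hx he')
        exact fun h => (PyrAux.take_avoid Pi hpi hx hxl) (h ▸ hx's')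
      intro z hz
      have hsplit : z ∈ (Pi.takeUntil x hx).support ∨ z ∈ (Pi.dropUntil x hx).support := by
        rw [← Walk.mem_support_append_iff, Walk.take_spec]
        exact hz
      rcases hsplit with h | h
      · exact hbwd z (by rwa [Walk.support_reverse, List.mem_reverse])
      · exact hfwd z h
    by_cases hlX : l ∈ X
    · obtain ⟨y, z, hyz, hyX, hzX, hly, hlz⟩ := PyrAux.mindeg_two h2 hlX
      have nb : ∀ w, G.Adj l w →
          s(l, w) ∈ P1.edges ∨ s(l, w) ∈ P2.edges ∨ s(l, w) ∈ P3.edges := by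
        intro w hadj
        rcases eclass s(l, w) (G.mem_edgeSet.2 hadj) with h | h | h | h | h | h
        · rw [Sym2.eq_iff] at h
          rcases h with ⟨ha, -⟩ | ⟨ha, -⟩
          · exact absurd ha hlk1
          · exact absurd ha hlk2
        · rw [Sym2.eq_iff] at h
          rcases h with ⟨ha, -⟩ | ⟨ha, -⟩
          · exact absurd ha hlk2
          · exact absurd ha hlk3
        · rw [Sym2.eq_iff] at h
          rcases h with ⟨ha, -⟩ | ⟨ha, -⟩
          · exact absurd ha hlk1
          · exact absurd ha hlk3
        · exact Or.inl h
        · exact Or.inr (Or.inl h)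
        · exact Or.inr (Or.inr h)
      have fullof : ∀ (ki : V) (Pi : G.Walk ki l), ∀ hpi : Pi.IsPath,
          (∀ x, x ∈ Pi.support → x ≠ ki → x ≠ l → ∀ e ∈ G.edgeSet, x ∈ e → e ∈ Pi.edges) →
          ¬ G.Adj ki l →
          ∀ w, G.Adj l w → w ∈ X → s(l, w) ∈ Pi.edges → ∀ z' ∈ Pi.support, z' ∈ X := by
        intro ki Pi hpi hea hnadj w hadj hwX he
        have hwP : w ∈ Pi.support := PyrAux.mem_support_of_edge_mem Pi he (by simp)
        have hwl : w ≠ l := hadj.ne'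
        have hwk : w ≠ ki := by
          rintro rfl
          exact hnadj hadj.symm
        exact chainP ki Pi hpi hea w hwX hwP hwk hwl
      have uniqnb : ∀ (ki : V) (Pi : G.Walk ki l), Pi.IsPath →
          ∀ w w', w ≠ l → w' ≠ l → s(l, w) ∈ Pi.edges → s(l, w') ∈ Pi.edges → w = w' := by
        intro ki Pi hpi w w' hwl hw'l hw hw'
        have h1 := PyrAux.first_edge_eq Pi.reverse hpi.reverse
          (by rwa [Walk.edges_reverse, List.mem_reverse] : s(l, w) ∈ Pi.reverse.edges) (by simp)
        have h2' := PyrAux.first_edge_eq Pi.reverse hpi.reverse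
          (by rwa [Walk.edges_reverse, List.mem_reverse] : s(l, w') ∈ Pi.reverse.edges) (by simp)
        have := h1.trans h2'.symm
        exact sym2eq l w w' hwl this
      have hno : ∀ (km : V) (Pm : G.Walk km l), ∀ hpm : Pm.IsPath,
          (∀ x, x ∈ Pm.support → x ≠ km → x ≠ l → ∀ e ∈ G.edgeSet, x ∈ e → e ∈ Pm.edges) →
          (∀ x ∈ P1.support, x ∈ X) → False → True := fun _ _ _ _ _ _ => trivial
      rcases nb y hly with hy1 | hy2 | hy3 <;> rcases nb z hlz with hz1 | hz2 | hz3
      · exact absurd (uniqnb k1 P1 hp1 y z hly.ne' hlz.ne' hy1 hz1) hyz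
      · -- P1, P2 full
        have full1 := fullof k1 P1 hp1 edgeat1 noadj1 y hly hyX hy1
        have full2 := fullof k2 P2 hp2 edgeat2 noadj2 z hlz hzX hz2
        have hno3 : ∀ x ∈ X, x ∈ P3.support → x = k3 ∨ x = l := by
          intro x hxX hxP
          by_contra hcon
          push_neg at hcon
          have hfull3 := chainP k3 P3 hp3 edgeat3 x hxX hxP hcon.1 hcon.2
          apply hXne
          rw [Set.eq_univ_iff_forall]
          intro w
          rcases hcov w with h | h | h
          · exact full1 w h
          · exact full2 w h
          · exact hfull3 w h
        refine PyrAux.finish P1 P2 hp1 hp2 (by omega) (by omega) h12 h13 h23 d12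
          hk3P1 hk3P2 full1 full2 ?_
        intro x hxX
        rcases hcov x with h | h | h
        · exact Or.inl h
        · exact Or.inr (Or.inl h)
        · rcases hno3 x hxX h with rfl | rfl
          · exact Or.inr (Or.inr rfl)
          · exact Or.inl hlP1
      · -- P1, P3 full
        have full1 := fullof k1 P1 hp1 edgeat1 noadj1 y hly hyX hy1
        have full3 := fullof k3 P3 hp3 edgeat3 noadj3 z hlz hzX hz3
        have hno2 : ∀ x ∈ X, x ∈ P2.support → x = k2 ∨ x = l := by
          intro x hxX hxP
          by_contra hcon
          push_neg at hcon
          have hfull2 := chainP k2 P2 hp2 edgeat2 x hxX hxP hcon.1 hcon.2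
          apply hXne
          rw [Set.eq_univ_iff_forall]
          intro w
          rcases hcov w with h | h | h
          · exact full1 w h
          · exact hfull2 w h
          · exact full3 w h
        refine PyrAux.finish P1 P3 hp1 hp3 (by omega) (by omega) h13 h12 h23.symm d13
          hk2P1 hk2P3 full1 full3 ?_
        intro x hxX
        rcases hcov x with h | h | h
        · exact Or.inl h
        · rcases hno2 x hxX h with rfl | rfl
          · exact Or.inr (Or.inr rfl)
          · exact Or.inl hlP1
        · exact Or.inr (Or.inl h)
      · -- P2, P1 full (symmetric to case 2)
        have full1 := fullof k1 P1 hp1 edgeat1 noadj1 z hlz hzX hz1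
        have full2 := fullof k2 P2 hp2 edgeat2 noadj2 y hly hyX hy2
        have hno3 : ∀ x ∈ X, x ∈ P3.support → x = k3 ∨ x = l := by
          intro x hxX hxP
          by_contra hcon
          push_neg at hcon
          have hfull3 := chainP k3 P3 hp3 edgeat3 x hxX hxP hcon.1 hcon.2
          apply hXne
          rw [Set.eq_univ_iff_forall]
          intro w
          rcases hcov w with h | h | h
          · exact full1 w h
          · exact full2 w h
          · exact hfull3 w h
        refine PyrAux.finish P1 P2 hp1 hp2 (by omega) (by omega) h12 h13 h23 d12
          hk3P1 hk3P2 full1 full2 ?_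
        intro x hxX
        rcases hcov x with h | h | h
        · exact Or.inl h
        · exact Or.inr (Or.inl h)
        · rcases hno3 x hxX h with rfl | rfl
          · exact Or.inr (Or.inr rfl)
          · exact Or.inl hlP1
      · exact absurd (uniqnb k2 P2 hp2 y z hly.ne' hlz.ne' hy2 hz2) hyz
      · -- P2, P3 full
        have full2 := fullof k2 P2 hp2 edgeat2 noadj2 y hly hyX hy2
        have full3 := fullof k3 P3 hp3 edgeat3 noadj3 z hlz hzX hz3
        have hno1 : ∀ x ∈ X, x ∈ P1.support → x = k1 ∨ x = l := by
          intro x hxX hxP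
          by_contra hcon
          push_neg at hcon
          have hfull1 := chainP k1 P1 hp1 edgeat1 x hxX hxP hcon.1 hcon.2
          apply hXne
          rw [Set.eq_univ_iff_forall]
          intro w
          rcases hcov w with h | h | h
          · exact hfull1 w h
          · exact full2 w h
          · exact full3 w h
        refine PyrAux.finish P2 P3 hp2 hp3 (by omega) (by omega) h23 h12.symm h13.symm d23
          hk1P2 hk1P3 full2 full3 ?_
        intro x hxX
        rcases hcov x with h | h | h
        · rcases hno1 x hxX h with rfl | rfl
          · exact Or.inr (Or.inr rfl)
          · exact Or.inl hlP2
        · exact Or.inl h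
        · exact Or.inr (Or.inl h)
      · -- P3, P1 full
        have full1 := fullof k1 P1 hp1 edgeat1 noadj1 z hlz hzX hz1
        have full3 := fullof k3 P3 hp3 edgeat3 noadj3 y hly hyX hy3
        have hno2 : ∀ x ∈ X, x ∈ P2.support → x = k2 ∨ x = l := by
          intro x hxX hxP
          by_contra hcon
          push_neg at hcon
          have hfull2 := chainP k2 P2 hp2 edgeat2 x hxX hxP hcon.1 hcon.2
          apply hXne
          rw [Set.eq_univ_iff_forall]
          intro w
          rcases hcov w with h | h | h
          · exact full1 w h
          · exact hfull2 w h
          · exact full3 w h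
        refine PyrAux.finish P1 P3 hp1 hp3 (by omega) (by omega) h13 h12 h23.symm d13
          hk2P1 hk2P3 full1 full3 ?_
        intro x hxX
        rcases hcov x with h | h | h
        · exact Or.inl h
        · rcases hno2 x hxX h with rfl | rfl
          · exact Or.inr (Or.inr rfl)
          · exact Or.inl hlP1
        · exact Or.inr (Or.inl h)
      · -- P3, P2 full
        have full2 := fullof k2 P2 hp2 edgeat2 noadj2 z hlz hzX hz2
        have full3 := fullof k3 P3 hp3 edgeat3 noadj3 y hly hyX hy3
        have hno1 : ∀ x ∈ X, x ∈ P1.support → x = k1 ∨ x = l := by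
          intro x hxX hxP
          by_contra hcon
          push_neg at hcon
          have hfull1 := chainP k1 P1 hp1 edgeat1 x hxX hxP hcon.1 hcon.2
          apply hXne
          rw [Set.eq_univ_iff_forall]
          intro w
          rcases hcov w with h | h | h
          · exact hfull1 w h
          · exact full2 w h
          · exact full3 w h
        refine PyrAux.finish P2 P3 hp2 hp3 (by omega) (by omega) h23 h12.symm h13.symm d23
          hk1P2 hk1P3 full2 full3 ?_
        intro x hxX
        rcases hcov x with h | h | h
        · rcases hno1 x hxX h with rfl | rfl
          · exact Or.inr (Or.inr rfl)
          · exact Or.inl hlP2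
        · exact Or.inl h
        · exact Or.inr (Or.inl h)
      · exact absurd (uniqnb k3 P3 hp3 y z hly.ne' hlz.ne' hy3 hz3) hyz
    · -- l ∉ X : the triangle
      have hcard : 3 ≤ X.ncard := by
        have := h2.1
        rwa [Nat.card_coe_set_eq] at this
      have hXk : ∀ x ∈ X, x = k1 ∨ x = k2 ∨ x = k3 := by
        intro x hxX
        have hxl : x ≠ l := fun hh => hlX (hh ▸ hxX)
        rcases hcov x with h | h | h
        · by_cases hk : x = k1
          · exact Or.inl hk
          · exact absurd (chainP k1 P1 hp1 edgeat1 x hxX h hk hxl l hlP1) hlX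
        · by_cases hk : x = k2
          · exact Or.inr (Or.inl hk)
          · exact absurd (chainP k2 P2 hp2 edgeat2 x hxX h hk hxl l hlP2) hlX
        · by_cases hk : x = k3
          · exact Or.inr (Or.inr hk)
          · exact absurd (chainP k3 P3 hp3 edgeat3 x hxX h hk hxl l hlP3) hlX
      have hsub : X ⊆ {k1, k2, k3} := by
        intro x hx
        rcases hXk x hx with rfl | rfl | rfl <;> simp
      have hle : ({k1, k2, k3} : Set V).ncard ≤ 3 := by
        refine le_trans (Set.ncard_insert_le _ _) ?_
        have h' := Set.ncard_insert_le k2 ({k3} : Set V)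
        rw [Set.ncard_singleton] at h'
        omega
      have heq : X = ({k1, k2, k3} : Set V) :=
        Set.eq_of_subset_of_ncard_le hsub (by omega) (Set.toFinite _)
      refine PyrAux.tri_finish h12 h23 h13 ?_
      intro x
      rw [heq]
      simp [Set.mem_insert_iff, Set.mem_singleton_iff]
end
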